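/- arXiv:1104.5276 — 5 statements merged into one kernel-verified Lean document; each statement's English description precedes it below -/
import Mathlib

section
/- Pointwise Bochner–Weitzenböck formula on a weighted Minkowski space (the Minkowski-space instance of Theorem 3.4, eq. (3.4), where the Chern connection coefficients vanish, Ric_∞(v) = −vᵀ(Hess Φ)v and ‖∇²u‖²_{HS(∇u)} = tr((g(V)⁻¹ Hess u)²)): Let F be a Minkowski norm on ℝⁿ, Ω ⊆ ℝⁿ open, Φ : Ω → ℝ a C^∞ weight function, u : Ω → ℝ a C^∞ function with ∇u(x) ≠ 0 for every x ∈ Ω, and V : Ω → ℝⁿ \ {0} a C^∞ vector field satisfying g(V(x))·V(x) = ∇u(x) for all x ∈ Ω (V is the Finsler gradient of u). Define the weighted divergence div_Φ W := div W + ⟨∇Φ, W⟩, the Finsler Laplacian Δu := div_Φ V, and the linearized Laplacian Δ^V f := div_Φ(g(V)⁻¹ ∇f). Then for every x ∈ Ω: Δ^V((1/2)·F(V)²)(x) − ⟨∇(Δu)(x), V(x)⟩ = −V(x)ᵀ (Hess Φ(x)) V(x) + tr( (g(V(x))⁻¹ · Hess u(x))² ). -/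
open scoped Matrix

/-- The fundamental tensor `g(v)` of a Minkowski norm: `g(v)_{ij} = (1/2) ∂²(F²)/∂vᵢ∂vⱼ (v)`. -/
noncomputable def gMat {n : ℕ} (F : (Fin n → ℝ) → ℝ) (v : Fin n → ℝ) :
    Matrix (Fin n) (Fin n) ℝ :=
  Matrix.of fun i j =>
    (1 / 2) * fderiv ℝ (fun w => fderiv ℝ (fun z => F z ^ 2) w (Pi.single j 1)) v (Pi.single i 1)

/-- A Minkowski norm on `ℝⁿ`: smooth away from the origin, positively `1`-homogeneous,
positive on nonzero vectors, with positive definite fundamental tensor. -/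
structure MinkowskiNorm (n : ℕ) : Type where
  F : (Fin n → ℝ) → ℝ
  smooth : ContDiffOn ℝ (⊤ : ℕ∞) F {v | v ≠ 0}
  homog : ∀ c : ℝ, 0 ≤ c → ∀ v : Fin n → ℝ, F (c • v) = c * F v
  pos : ∀ v : Fin n → ℝ, v ≠ 0 → 0 < F v
  posdef : ∀ v : Fin n → ℝ, v ≠ 0 → (gMat F v).PosDef

/-- Euclidean gradient. -/
noncomputable def egrad {n : ℕ} (f : (Fin n → ℝ) → ℝ) (x : Fin n → ℝ) : Fin n → ℝ :=
  fun i => fderiv ℝ f x (Pi.single i 1)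

/-- Euclidean divergence. -/
noncomputable def ediv {n : ℕ} (W : (Fin n → ℝ) → (Fin n → ℝ)) (x : Fin n → ℝ) : ℝ :=
  ∑ i, fderiv ℝ (fun y => W y i) x (Pi.single i 1)

/-- Euclidean Hessian matrix. -/
noncomputable def ehess {n : ℕ} (f : (Fin n → ℝ) → ℝ) (x : Fin n → ℝ) :
    Matrix (Fin n) (Fin n) ℝ :=
  Matrix.of fun i j =>
    fderiv ℝ (fun y => fderiv ℝ f y (Pi.single j 1)) x (Pi.single i 1)

/-- Weighted divergence `div_Φ W = div W + ⟨∇Φ, W⟩` for the measure `e^Φ dx`. -/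
noncomputable def divPhi {n : ℕ} (Φ : (Fin n → ℝ) → ℝ) (W : (Fin n → ℝ) → (Fin n → ℝ))
    (x : Fin n → ℝ) : ℝ :=
  ediv W x + (egrad Φ x ⬝ᵥ W x)



section aux
variable {n : ℕ}

private lemma clm_expand (L : (Fin n → ℝ) →L[ℝ] ℝ) (w : Fin n → ℝ) :
    L w = ∑ i, w i * L (Pi.single i 1) := by
  have hw : w = ∑ i : Fin n, w i • (Pi.single i (1:ℝ) : Fin n → ℝ) := by
    funext j
    simp [Pi.single_apply]
  conv_lhs => rw [hw]
  rw [map_sum]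
  simp [smul_eq_mul]

private lemma fderiv_eval_comm {f : (Fin n → ℝ) → ℝ} {x : Fin n → ℝ}
    (hf : ContDiffAt ℝ (⊤ : ℕ∞) f x) (a b : Fin n → ℝ) :
    fderiv ℝ (fun w => fderiv ℝ f w a) x b = fderiv ℝ (fderiv ℝ f) x b a := by
  have hd : DifferentiableAt ℝ (fderiv ℝ f) x :=
    (hf.fderiv_right (m := 1) (WithTop.coe_le_coe.mpr le_top)).differentiableAt one_ne_zero
  have h2 : HasFDerivAt (fun w => (ContinuousLinearMap.apply ℝ ℝ a) (fderiv ℝ f w))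
      ((ContinuousLinearMap.apply ℝ ℝ a).comp (fderiv ℝ (fderiv ℝ f) x)) x :=
    (ContinuousLinearMap.apply ℝ ℝ a).hasFDerivAt.comp x hd.hasFDerivAt
  have h1 : (fun w => fderiv ℝ f w a)
      = fun w => (ContinuousLinearMap.apply ℝ ℝ a) (fderiv ℝ f w) := rfl
  rw [h1, h2.fderiv]
  rfl

private lemma fderiv_swap {f : (Fin n → ℝ) → ℝ} {x : Fin n → ℝ}
    (hf : ContDiffAt ℝ (⊤ : ℕ∞) f x) (a b : Fin n → ℝ) :
    fderiv ℝ (fun w => fderiv ℝ f w a) x b = fderiv ℝ (fun w => fderiv ℝ f w b) x a := by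
  rw [fderiv_eval_comm hf a b, fderiv_eval_comm hf b a]
  exact hf.isSymmSndFDerivAt (by
    rw [minSmoothness_of_isRCLikeNormedField]; exact WithTop.coe_le_coe.mpr le_top) b a

private lemma contDiffAt_fderiv_apply {f : (Fin n → ℝ) → ℝ} {x : Fin n → ℝ}
    (hf : ContDiffAt ℝ (⊤ : ℕ∞) f x) (a : Fin n → ℝ) :
    ContDiffAt ℝ (⊤ : ℕ∞) (fun w => fderiv ℝ f w a) x :=
  (hf.fderiv_right (by simp)).clm_apply contDiffAt_const

private lemma fderiv_pi_apply {V : (Fin n → ℝ) → Fin n → ℝ} {y : Fin n → ℝ}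
    (hd : DifferentiableAt ℝ V y) (k : Fin n) (b : Fin n → ℝ) :
    fderiv ℝ (fun z => V z k) y b = fderiv ℝ V y b k := by
  have h2 : HasFDerivAt (fun z => (ContinuousLinearMap.proj (R := ℝ)
        (φ := fun _ : Fin n => ℝ) k) (V z))
      ((ContinuousLinearMap.proj (R := ℝ) (φ := fun _ : Fin n => ℝ) k).comp (fderiv ℝ V y)) y :=
    (ContinuousLinearMap.proj (R := ℝ) (φ := fun _ : Fin n => ℝ) k).hasFDerivAt.comp
      y hd.hasFDerivAt
  have h1 : (fun z => V z k)
      = fun z => (ContinuousLinearMap.proj (R := ℝ) (φ := fun _ : Fin n => ℝ) k) (V z) := rfl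
  rw [h1, h2.fderiv]
  rfl

private lemma fderiv_comp_expand {V : (Fin n → ℝ) → Fin n → ℝ} {f : (Fin n → ℝ) → ℝ}
    {y : Fin n → ℝ} (hf : DifferentiableAt ℝ f (V y)) (hV : DifferentiableAt ℝ V y)
    (b : Fin n → ℝ) :
    fderiv ℝ (fun z => f (V z)) y b
      = ∑ k, fderiv ℝ (fun z => V z k) y b * fderiv ℝ f (V y) (Pi.single k 1) := by
  have h2 : HasFDerivAt (fun z => f (V z)) ((fderiv ℝ f (V y)).comp (fderiv ℝ V y)) y :=
    hf.hasFDerivAt.comp y hV.hasFDerivAt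
  rw [h2.fderiv, ContinuousLinearMap.comp_apply,
    clm_expand (fderiv ℝ f (V y)) (fderiv ℝ V y b)]
  exact Finset.sum_congr rfl fun k _ => by rw [fderiv_pi_apply hV k b]

end aux

section mink
variable {n : ℕ}

private lemma contDiffAt_sq (Fk : MinkowskiNorm n) {v : Fin n → ℝ} (hv : v ≠ 0) :
    ContDiffAt ℝ (⊤ : ℕ∞) (fun w => Fk.F w ^ 2) v := by
  have hop : IsOpen {w : Fin n → ℝ | w ≠ 0} := isOpen_compl_singleton
  exact (Fk.smooth.pow 2).contDiffAt (hop.mem_nhds hv)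

private lemma gMat_symm (Fk : MinkowskiNorm n) {v : Fin n → ℝ} (hv : v ≠ 0) (i j : Fin n) :
    gMat Fk.F v i j = gMat Fk.F v j i := by
  unfold gMat
  simp only [Matrix.of_apply]
  rw [fderiv_swap (contDiffAt_sq Fk hv)]

private lemma fderiv_sq_homog (Fk : MinkowskiNorm n) {v : Fin n → ℝ} (hv : v ≠ 0)
    {c : ℝ} (hc : 0 < c) (b : Fin n → ℝ) :
    fderiv ℝ (fun w => Fk.F w ^ 2) (c • v) b = c * fderiv ℝ (fun w => Fk.F w ^ 2) v b := by
  set q : (Fin n → ℝ) → ℝ := fun w => Fk.F w ^ 2 with hq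
  have hcv : c • v ≠ 0 := smul_ne_zero (ne_of_gt hc) hv
  have h1 : HasFDerivAt (fun w : Fin n → ℝ => c • w)
      (c • ContinuousLinearMap.id ℝ (Fin n → ℝ)) v :=
    (c • ContinuousLinearMap.id ℝ (Fin n → ℝ)).hasFDerivAt
  have hq1 : HasFDerivAt q (fderiv ℝ q (c • v)) (c • v) :=
    ((contDiffAt_sq Fk hcv).differentiableAt (by simp)).hasFDerivAt
  have hcomp : HasFDerivAt (fun w => q (c • w))
      ((fderiv ℝ q (c • v)).comp (c • ContinuousLinearMap.id ℝ (Fin n → ℝ))) v :=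
    hq1.comp v h1
  have heq : (fun w => q (c • w)) = fun w => c ^ 2 * q w := by
    funext w
    simp only [hq]
    rw [Fk.homog c hc.le w]; ring
  have h2 : HasFDerivAt (fun w => c ^ 2 * q w) ((c ^ 2) • fderiv ℝ q v) v :=
    (((contDiffAt_sq Fk hv).differentiableAt (by simp)).hasFDerivAt).const_mul (c ^ 2)
  rw [heq] at hcomp
  have hu := hcomp.unique h2
  have happ := congrArg (fun L => L b) hu
  simp only [ContinuousLinearMap.coe_comp', Function.comp_apply,
    ContinuousLinearMap.smul_apply, ContinuousLinearMap.coe_smul', Pi.smul_apply,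
    ContinuousLinearMap.coe_id', id_eq, smul_eq_mul] at happ
  -- happ : fderiv ℝ q (c • v) (c • b) = c ^ 2 * fderiv ℝ q v b  (roughly)
  rw [map_smul, smul_eq_mul] at happ
  have happ' : c * fderiv ℝ q (c • v) b = c * (c * fderiv ℝ q v b) := by
    rw [happ]; ring
  exact mul_left_cancel₀ (ne_of_gt hc) happ'

private lemma euler_grad (Fk : MinkowskiNorm n) {v : Fin n → ℝ} (hv : v ≠ 0) (i : Fin n) :
    fderiv ℝ (fun w => Fk.F w ^ 2) v (Pi.single i 1)
      = 2 * (gMat Fk.F v).mulVec v i := by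
  set q : (Fin n → ℝ) → ℝ := fun w => Fk.F w ^ 2 with hq
  set G : (Fin n → ℝ) → ℝ := fun w => fderiv ℝ q w (Pi.single i 1) with hGdef
  have hGd : DifferentiableAt ℝ G v :=
    (contDiffAt_fderiv_apply (contDiffAt_sq Fk hv) _).differentiableAt (by simp)
  have hψ : HasDerivAt (fun c : ℝ => c • v) v 1 := by
    simpa using (hasDerivAt_id (1:ℝ)).smul_const v
  have h1 : HasDerivAt (fun c : ℝ => G (c • v)) (fderiv ℝ G v v) 1 := by
    have hG1 : HasFDerivAt G (fderiv ℝ G v) ((1:ℝ) • v) := by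
      rw [one_smul]; exact hGd.hasFDerivAt
    have h := hG1.comp_hasDerivAt 1 hψ
    exact h
  have heq : (fun c : ℝ => G (c • v)) =ᶠ[nhds 1] fun c => c * G v := by
    filter_upwards [eventually_gt_nhds one_pos] with c hc
    exact fderiv_sq_homog Fk hv hc _
  have h1' : HasDerivAt (fun c : ℝ => c * G v) (fderiv ℝ G v v) 1 :=
    h1.congr_of_eventuallyEq heq.symm
  have h3 : HasDerivAt (fun c : ℝ => c * G v) (G v) 1 := by
    simpa using (hasDerivAt_id (1:ℝ)).mul_const (G v)
  have hkey : fderiv ℝ G v v = G v := h1'.unique h3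
  have hexp : fderiv ℝ G v v = ∑ j, v j * fderiv ℝ G v (Pi.single j 1) :=
    clm_expand _ _
  have hGj : ∀ j, fderiv ℝ G v (Pi.single j 1) = 2 * gMat Fk.F v i j := by
    intro j
    have : gMat Fk.F v j i
        = (1 / 2) * fderiv ℝ (fun w => fderiv ℝ q w (Pi.single i 1)) v (Pi.single j 1) := rfl
    rw [gMat_symm Fk hv i j, this]
    simp only [hGdef]
    ring
  have : G v = ∑ j, v j * (2 * gMat Fk.F v i j) := by
    rw [← hkey, hexp]
    exact Finset.sum_congr rfl fun j _ => by rw [hGj j]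
  rw [show fderiv ℝ (fun w => Fk.F w ^ 2) v (Pi.single i 1) = G v from rfl, this]
  simp only [Matrix.mulVec, dotProduct, Finset.mul_sum]
  exact Finset.sum_congr rfl fun j _ => by ring
end mink

/-- Pointwise Bochner–Weitzenböck formula on a weighted Minkowski space. -/
theorem bochner_weitzenboeck_minkowski {n : ℕ} (hn : 2 ≤ n) (Fk : MinkowskiNorm n)
    (Ω : Set (Fin n → ℝ)) (hΩ : IsOpen Ω)
    (Φ u : (Fin n → ℝ) → ℝ) (V : (Fin n → ℝ) → Fin n → ℝ)
    (hΦ : ContDiffOn ℝ (⊤ : ℕ∞) Φ Ω) (hu : ContDiffOn ℝ (⊤ : ℕ∞) u Ω) (hV : ContDiffOn ℝ (⊤ : ℕ∞) V Ω)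
    (hgrad0 : ∀ x ∈ Ω, egrad u x ≠ 0) (hV0 : ∀ x ∈ Ω, V x ≠ 0)
    (hVg : ∀ x ∈ Ω, (gMat Fk.F (V x)).mulVec (V x) = egrad u x) :
    ∀ x ∈ Ω,
      divPhi Φ (fun y => ((gMat Fk.F (V y))⁻¹).mulVec
          (egrad (fun z => (1 / 2) * Fk.F (V z) ^ 2) y)) x
        - (egrad (fun y => divPhi Φ V y) x ⬝ᵥ V x)
      = -(V x ⬝ᵥ (ehess Φ x).mulVec (V x))
        + Matrix.trace (((gMat Fk.F (V x))⁻¹ * ehess u x) ^ 2) := by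
  classical
  intro x hx
  set q : (Fin n → ℝ) → ℝ := fun w => Fk.F w ^ 2 with hqdef
  -- pointwise smoothness
  have hVat : ∀ y ∈ Ω, ContDiffAt ℝ (⊤ : ℕ∞) V y := fun y hy => hV.contDiffAt (hΩ.mem_nhds hy)
  have huat : ∀ y ∈ Ω, ContDiffAt ℝ (⊤ : ℕ∞) u y := fun y hy => hu.contDiffAt (hΩ.mem_nhds hy)
  have hΦat : ∀ y ∈ Ω, ContDiffAt ℝ (⊤ : ℕ∞) Φ y := fun y hy => hΦ.contDiffAt (hΩ.mem_nhds hy)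
  have hVi : ∀ y ∈ Ω, ∀ i, ContDiffAt ℝ (⊤ : ℕ∞) (fun z => V z i) y :=
    fun y hy i => contDiffAt_pi.mp (hVat y hy) i
  -- Jacobian of V
  set Jm : (Fin n → ℝ) → Matrix (Fin n) (Fin n) ℝ :=
    fun y => Matrix.of fun i j => fderiv ℝ (fun z => V z i) y (Pi.single j 1) with hJmdef
  -- Step 1: Euler + hVg
  have hGX : ∀ y ∈ Ω, ∀ i, fderiv ℝ q (V y) (Pi.single i 1) = 2 * egrad u y i := by
    intro y hy i
    rw [show fderiv ℝ q (V y) (Pi.single i 1)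
        = fderiv ℝ (fun w => Fk.F w ^ 2) (V y) (Pi.single i 1) from rfl,
      euler_grad Fk (hV0 y hy) i, hVg y hy]
  -- Step 2: g(V) * J = Hess u
  have hgJ : ∀ y ∈ Ω, gMat Fk.F (V y) * Jm y = ehess u y := by
    intro y hy
    ext i j
    have hfd : DifferentiableAt ℝ (fun w => fderiv ℝ q w (Pi.single i 1)) (V y) :=
      (contDiffAt_fderiv_apply (contDiffAt_sq Fk (hV0 y hy)) _).differentiableAt (by simp)
    have hVd : DifferentiableAt ℝ V y := (hVat y hy).differentiableAt (by simp)
    have hA : fderiv ℝ (fun z => fderiv ℝ q (V z) (Pi.single i 1)) y (Pi.single j 1)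
        = ∑ k, Jm y k j * (2 * gMat Fk.F (V y) k i) := by
      rw [fderiv_comp_expand (f := fun w => fderiv ℝ q w (Pi.single i 1)) hfd hVd
        (Pi.single j 1)]
      refine Finset.sum_congr rfl fun k _ => ?_
      have hg : gMat Fk.F (V y) k i = (1 / 2) *
          fderiv ℝ (fun w => fderiv ℝ q w (Pi.single i 1)) (V y) (Pi.single k 1) := rfl
      have hj : Jm y k j = fderiv ℝ (fun z => V z k) y (Pi.single j 1) := rfl
      rw [hg, hj]; ring
    have hB : fderiv ℝ (fun z => fderiv ℝ q (V z) (Pi.single i 1)) y (Pi.single j 1)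
        = 2 * ehess u y i j := by
      have hev : (fun z => fderiv ℝ q (V z) (Pi.single i 1))
          =ᶠ[nhds y] fun z => 2 * fderiv ℝ u z (Pi.single i 1) := by
        filter_upwards [hΩ.mem_nhds hy] with z hz using hGX z hz i
      rw [hev.fderiv_eq, fderiv_const_mul
        ((contDiffAt_fderiv_apply (huat y hy) _).differentiableAt (by simp)) 2]
      have : fderiv ℝ (fun z => fderiv ℝ u z (Pi.single i 1)) y (Pi.single j 1)
          = ehess u y i j := by
        rw [fderiv_swap (huat y hy)]; rfl
      simp only [ContinuousLinearMap.coe_smul', Pi.smul_apply, smul_eq_mul, this]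
    have h2 : ∑ k, Jm y k j * (2 * gMat Fk.F (V y) k i) = 2 * ehess u y i j := by
      rw [← hA, hB]
    have h3 : (2:ℝ) * ∑ k, gMat Fk.F (V y) i k * Jm y k j = 2 * ehess u y i j := by
      rw [← h2, Finset.mul_sum]
      refine Finset.sum_congr rfl fun k _ => ?_
      rw [gMat_symm Fk (hV0 y hy) i k]; ring
    have h4 := mul_left_cancel₀ (two_ne_zero (α := ℝ)) h3
    simpa [Matrix.mul_apply] using h4
  -- determinants
  have hdet : ∀ y ∈ Ω, IsUnit (gMat Fk.F (V y)).det :=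
    fun y hy => (Fk.posdef _ (hV0 y hy)).det_pos.ne'.isUnit
  have hJg : ∀ y ∈ Ω, (gMat Fk.F (V y))⁻¹ * ehess u y = Jm y := by
    intro y hy
    rw [← hgJ y hy, ← Matrix.mul_assoc, Matrix.nonsing_inv_mul _ (hdet y hy), Matrix.one_mul]
  -- symmetry of hessians and g
  have hHsymm : ∀ y ∈ Ω, (ehess u y)ᵀ = ehess u y := by
    intro y hy
    ext i j
    show ehess u y j i = ehess u y i j
    show fderiv ℝ (fun z => fderiv ℝ u z (Pi.single i 1)) y (Pi.single j 1)
      = fderiv ℝ (fun z => fderiv ℝ u z (Pi.single j 1)) y (Pi.single i 1)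
    exact fderiv_swap (huat y hy) _ _
  have hgT : ∀ y ∈ Ω, (gMat Fk.F (V y))ᵀ = gMat Fk.F (V y) := by
    intro y hy
    ext i j
    exact gMat_symm Fk (hV0 y hy) j i
  -- the key identity : the Finsler gradient field equals Jm ⬝ V
  have hW : ∀ y ∈ Ω,
      ((gMat Fk.F (V y))⁻¹).mulVec (egrad (fun z => (1 / 2) * Fk.F (V z) ^ 2) y)
        = (Jm y).mulVec (V y) := by
    intro y hy
    have hVd : DifferentiableAt ℝ V y := (hVat y hy).differentiableAt (by simp)
    have hqd : DifferentiableAt ℝ q (V y) :=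
      (contDiffAt_sq Fk (hV0 y hy)).differentiableAt (by simp)
    have hgrad_h : egrad (fun z => (1 / 2) * Fk.F (V z) ^ 2) y
        = (Jm y)ᵀ.mulVec (egrad u y) := by
      funext i
      have hcomp : DifferentiableAt ℝ (fun z => q (V z)) y := hqd.comp y hVd
      have h1 : egrad (fun z => (1 / 2) * Fk.F (V z) ^ 2) y i
          = (1/2) * fderiv ℝ (fun z => q (V z)) y (Pi.single i 1) := by
        show fderiv ℝ (fun z => (1/2) * q (V z)) y (Pi.single i 1) = _
        rw [fderiv_const_mul hcomp (1/2 : ℝ)]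
        simp
      rw [h1, fderiv_comp_expand hqd hVd (Pi.single i 1)]
      have h2 : ∀ k, fderiv ℝ q (V y) (Pi.single k 1) = 2 * egrad u y k :=
        fun k => hGX y hy k
      simp only [Matrix.mulVec, dotProduct, Matrix.transpose_apply, Finset.mul_sum]
      refine Finset.sum_congr rfl fun k _ => ?_
      rw [h2 k]
      show (1:ℝ)/2 * (fderiv ℝ (fun z => V z k) y (Pi.single i 1) * (2 * egrad u y k)) = _
      have : Jm y k i = fderiv ℝ (fun z => V z k) y (Pi.single i 1) := rfl
      rw [this]; ring
    rw [hgrad_h, ← hVg y hy]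
    rw [Matrix.mulVec_mulVec, Matrix.mulVec_mulVec]
    have hJTg : (Jm y)ᵀ * gMat Fk.F (V y) = gMat Fk.F (V y) * Jm y := by
      calc (Jm y)ᵀ * gMat Fk.F (V y) = (Jm y)ᵀ * (gMat Fk.F (V y))ᵀ := by rw [hgT y hy]
        _ = (gMat Fk.F (V y) * Jm y)ᵀ := by rw [Matrix.transpose_mul]
        _ = (ehess u y)ᵀ := by rw [hgJ y hy]
        _ = ehess u y := hHsymm y hy
        _ = gMat Fk.F (V y) * Jm y := (hgJ y hy).symm
    rw [Matrix.mul_assoc, hJTg, ← Matrix.mul_assoc,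
      Matrix.nonsing_inv_mul _ (hdet y hy), Matrix.one_mul]
  -- replace the statement's vector field by W'
  set W' : (Fin n → ℝ) → Fin n → ℝ :=
    fun y i => ∑ j, V y j * fderiv ℝ (fun z => V z i) y (Pi.single j 1) with hW'def
  have hWW' : ∀ y ∈ Ω,
      ((gMat Fk.F (V y))⁻¹).mulVec (egrad (fun z => (1 / 2) * Fk.F (V z) ^ 2) y) = W' y := by
    intro y hy
    rw [hW y hy]
    funext i
    simp only [Matrix.mulVec, dotProduct, hW'def]
    exact Finset.sum_congr rfl fun j _ => by rw [mul_comm]; rfl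
  have hdivW : divPhi Φ (fun y => ((gMat Fk.F (V y))⁻¹).mulVec
      (egrad (fun z => (1 / 2) * Fk.F (V z) ^ 2) y)) x = divPhi Φ W' x := by
    unfold divPhi ediv
    congr 1
    · refine Finset.sum_congr rfl fun i _ => ?_
      have hev : (fun y => ((gMat Fk.F (V y))⁻¹).mulVec
          (egrad (fun z => (1 / 2) * Fk.F (V z) ^ 2) y) i) =ᶠ[nhds x] fun y => W' y i := by
        filter_upwards [hΩ.mem_nhds hx] with z hz using congrFun (hWW' z hz) i
      rw [hev.fderiv_eq]
    · exact congrArg (fun w => egrad Φ x ⬝ᵥ w) (hWW' x hx)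
  rw [hdivW]
  -- differentiability helpers at x
  have hdiffJij : ∀ i j, DifferentiableAt ℝ
      (fun y => fderiv ℝ (fun z => V z i) y (Pi.single j 1)) x :=
    fun i j => (contDiffAt_fderiv_apply (hVi x hx i) _).differentiableAt (by simp)
  have hdiffVj : ∀ j, DifferentiableAt ℝ (fun y => V y j) x :=
    fun j => (hVi x hx j).differentiableAt (by simp)
  have hdiffΦi : ∀ i, DifferentiableAt ℝ
      (fun y => fderiv ℝ Φ y (Pi.single i 1)) x :=
    fun i => (contDiffAt_fderiv_apply (hΦat x hx) _).differentiableAt (by simp)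
  -- Step F : divergence of W'
  have hterm : ∀ i, fderiv ℝ (fun y => W' y i) x (Pi.single i 1)
      = ∑ j, (Jm x j i * Jm x i j
          + V x j * fderiv ℝ (fun y => fderiv ℝ (fun z => V z i) y (Pi.single i 1)) x
              (Pi.single j 1)) := by
    intro i
    have hd : ∀ j ∈ Finset.univ, DifferentiableAt ℝ
        (fun y => V y j * fderiv ℝ (fun z => V z i) y (Pi.single j 1)) x :=
      fun j _ => (hdiffVj j).mul (hdiffJij i j)
    rw [show (fun y => W' y i) = fun y => ∑ j,
        V y j * fderiv ℝ (fun z => V z i) y (Pi.single j 1) from rfl,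
      fderiv_fun_sum hd]
    rw [ContinuousLinearMap.sum_apply]
    refine Finset.sum_congr rfl fun j _ => ?_
    rw [fderiv_fun_mul (hdiffVj j) (hdiffJij i j)]
    have hsw : fderiv ℝ (fun y => fderiv ℝ (fun z => V z i) y (Pi.single j 1)) x
        (Pi.single i 1)
        = fderiv ℝ (fun y => fderiv ℝ (fun z => V z i) y (Pi.single i 1)) x
            (Pi.single j 1) :=
      fderiv_swap (hVi x hx i) _ _
    simp only [ContinuousLinearMap.add_apply, ContinuousLinearMap.coe_smul', Pi.smul_apply,
      smul_eq_mul, hsw]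
    have h1 : Jm x i j = fderiv ℝ (fun z => V z i) x (Pi.single j 1) := rfl
    have h2 : Jm x j i = fderiv ℝ (fun z => V z j) x (Pi.single i 1) := rfl
    rw [h1, h2]; ring
  have hedivW' : ediv W' x = (∑ i, ∑ j, Jm x i j * Jm x j i)
      + ∑ j, V x j * fderiv ℝ (fun y => ediv V y) x (Pi.single j 1) := by
    rw [show ediv W' x = ∑ i, fderiv ℝ (fun y => W' y i) x (Pi.single i 1) from rfl]
    rw [Finset.sum_congr rfl fun i _ => (hterm i).trans Finset.sum_add_distrib]
    rw [Finset.sum_add_distrib]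
    congr 1
    · rw [Finset.sum_comm]
    · rw [Finset.sum_comm]
      refine Finset.sum_congr rfl fun j _ => ?_
      rw [← Finset.mul_sum]
      congr 1
      have hd : ∀ i ∈ Finset.univ, DifferentiableAt ℝ
          (fun y => fderiv ℝ (fun z => V z i) y (Pi.single i 1)) x :=
        fun i _ => (contDiffAt_fderiv_apply (hVi x hx i) _).differentiableAt (by simp)
      rw [show (fun y => ediv V y) = fun y => ∑ i,
          fderiv ℝ (fun z => V z i) y (Pi.single i 1) from rfl, fderiv_fun_sum hd,
        ContinuousLinearMap.sum_apply]
  -- Step G : gradient of divPhi Φ V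
  have hdivPhiV : ∀ j, fderiv ℝ (fun y => divPhi Φ V y) x (Pi.single j 1)
      = fderiv ℝ (fun y => ediv V y) x (Pi.single j 1)
        + ∑ i, (ehess Φ x j i * V x i
            + egrad Φ x i * fderiv ℝ (fun z => V z i) x (Pi.single j 1)) := by
    intro j
    have hdediv : DifferentiableAt ℝ (fun y => ediv V y) x := by
      rw [show (fun y => ediv V y) = fun y => ∑ i,
          fderiv ℝ (fun z => V z i) y (Pi.single i 1) from rfl]
      exact DifferentiableAt.fun_sum fun i _ =>
        (contDiffAt_fderiv_apply (hVi x hx i) _).differentiableAt (by simp)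
    have hddot : DifferentiableAt ℝ
        (fun y => ∑ i, fderiv ℝ Φ y (Pi.single i 1) * V y i) x :=
      DifferentiableAt.fun_sum fun i _ => (hdiffΦi i).mul (hdiffVj i)
    have hsplit : (fun y => divPhi Φ V y) = fun y => ediv V y
        + ∑ i, fderiv ℝ Φ y (Pi.single i 1) * V y i := by
      funext y
      show ediv V y + egrad Φ y ⬝ᵥ V y = _
      rfl
    rw [hsplit, fderiv_fun_add hdediv hddot, ContinuousLinearMap.add_apply]
    congr 1
    rw [fderiv_fun_sum fun i _ => (hdiffΦi i).fun_mul (hdiffVj i), ContinuousLinearMap.sum_apply]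
    refine Finset.sum_congr rfl fun i _ => ?_
    rw [fderiv_fun_mul (hdiffΦi i) (hdiffVj i)]
    have h3 : fderiv ℝ (fun y => fderiv ℝ Φ y (Pi.single i 1)) x (Pi.single j 1)
        = ehess Φ x j i := rfl
    simp only [ContinuousLinearMap.add_apply, ContinuousLinearMap.coe_smul', Pi.smul_apply,
      smul_eq_mul, h3]
    have h4 : egrad Φ x i = fderiv ℝ Φ x (Pi.single i 1) := rfl
    rw [h4]; ring
  -- the dot product of the gradient of divPhi V with V
  have hdot2 : (egrad (fun y => divPhi Φ V y) x ⬝ᵥ V x)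
      = (∑ j, V x j * fderiv ℝ (fun y => ediv V y) x (Pi.single j 1))
        + ((∑ j, ∑ i, V x j * (ehess Φ x j i * V x i))
        + (∑ j, ∑ i, V x j * (egrad Φ x i * Jm x i j))) := by
    have h0 : (egrad (fun y => divPhi Φ V y) x ⬝ᵥ V x)
        = ∑ j, fderiv ℝ (fun y => divPhi Φ V y) x (Pi.single j 1) * V x j := rfl
    rw [h0]
    have h1 : ∀ j : Fin n, fderiv ℝ (fun y => divPhi Φ V y) x (Pi.single j 1) * V x j
        = V x j * fderiv ℝ (fun y => ediv V y) x (Pi.single j 1)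
          + ((∑ i, V x j * (ehess Φ x j i * V x i))
          + (∑ i, V x j * (egrad Φ x i * Jm x i j))) := by
      intro j
      have e : ∀ A S1 S2 : ℝ, (A + (S1 + S2)) * V x j
          = V x j * A + (V x j * S1 + V x j * S2) := by intros; ring
      rw [hdivPhiV j, Finset.sum_add_distrib, e, Finset.mul_sum, Finset.mul_sum]
      rfl
    rw [Finset.sum_congr rfl fun j _ => h1 j, Finset.sum_add_distrib, Finset.sum_add_distrib]
  -- the weight term for W'
  have hΦdot : (egrad Φ x ⬝ᵥ W' x) = ∑ j, ∑ i, V x j * (egrad Φ x i * Jm x i j) := by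
    have h0 : (egrad Φ x ⬝ᵥ W' x) = ∑ i, egrad Φ x i * ∑ j, V x j * Jm x i j := rfl
    rw [h0]
    have h1 : ∀ i : Fin n, egrad Φ x i * ∑ j, V x j * Jm x i j
        = ∑ j, V x j * (egrad Φ x i * Jm x i j) := by
      intro i
      rw [Finset.mul_sum]
      exact Finset.sum_congr rfl fun j _ => by ring
    rw [Finset.sum_congr rfl fun i _ => h1 i, Finset.sum_comm]
  -- the trace term
  have htrace : Matrix.trace (((gMat Fk.F (V x))⁻¹ * ehess u x) ^ 2)
      = ∑ i, ∑ j, Jm x i j * Jm x j i := by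
    rw [hJg x hx, pow_two]
    simp [Matrix.trace, Matrix.mul_apply, Matrix.diag]
  -- the Hessian-of-weight term
  have hPdot : (V x ⬝ᵥ (ehess Φ x).mulVec (V x))
      = ∑ j, ∑ i, V x j * (ehess Φ x j i * V x i) := by
    simp only [dotProduct, Matrix.mulVec, Finset.mul_sum]
  -- final assembly
  have hsplit : divPhi Φ W' x = ediv W' x + (egrad Φ x ⬝ᵥ W' x) := rfl
  rw [hsplit, hedivW', hΦdot, hdot2, htrace, hPdot]
  ring
end

section
/- Bochner–Weitzenböck inequality with dimension parameter on a weighted Minkowski space (the Minkowski-space instance of Theorem 3.4, eq. (3.5)): Let F be a Minkowski norm on ℝⁿ, Ω ⊆ ℝⁿ open, Φ : Ω → ℝ a C^∞ weight function, u : Ω → ℝ a C^∞ function with ∇u(x) ≠ 0 for every x ∈ Ω, and V : Ω → ℝⁿ \ {0} a C^∞ vector field satisfying g(V(x))·V(x) = ∇u(x) for all x ∈ Ω. Define div_Φ W := div W + ⟨∇Φ, W⟩, Δu := div_Φ V, and Δ^V f := div_Φ(g(V)⁻¹ ∇f). Then for every real N with n < N < ∞ and every x ∈ Ω: Δ^V((1/2)·F(V)²)(x)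 − ⟨∇(Δu)(x), V(x)⟩ ≥ −V(x)ᵀ (Hess Φ(x)) V(x) − ⟨∇Φ(x), V(x)⟩²/(N − n) + (Δu(x))²/N. -/
open scoped Matrix

namespace BWaux

variable {n : ℕ}

/-- Partial derivative in the `i`-th coordinate direction. -/
noncomputable def pd (f : (Fin n → ℝ) → ℝ) (i : Fin n) (x : Fin n → ℝ) : ℝ :=
  fderiv ℝ f x (Pi.single i 1)

theorem fderiv_eq_sum_pd (f : (Fin n → ℝ) → ℝ) (x w : Fin n → ℝ) :
    fderiv ℝ f x w = ∑ i, w i * pd f i x := by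
  have hw : w = ∑ i, w i • (Pi.single i (1:ℝ) : Fin n → ℝ) := by
    funext j; simp [Finset.sum_apply, Pi.single_apply]
  conv_lhs => rw [hw]
  rw [map_sum]
  simp [pd]

theorem pd_congr {f g : (Fin n → ℝ) → ℝ} {x : Fin n → ℝ} (h : f =ᶠ[nhds x] g) (i : Fin n) :
    pd f i x = pd g i x := by
  unfold pd; rw [h.fderiv_eq]

theorem pd_congr_open {f g : (Fin n → ℝ) → ℝ} {s : Set (Fin n → ℝ)} (hs : IsOpen s)
    {x : Fin n → ℝ} (hx : x ∈ s) (h : ∀ y ∈ s, f y = g y) (i : Fin n) :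
    pd f i x = pd g i x :=
  pd_congr (Filter.eventuallyEq_of_mem (hs.mem_nhds hx) h) i

theorem pd_add {f g : (Fin n → ℝ) → ℝ} {x : Fin n → ℝ} (hf : DifferentiableAt ℝ f x)
    (hg : DifferentiableAt ℝ g x) (i : Fin n) :
    pd (fun y => f y + g y) i x = pd f i x + pd g i x := by
  unfold pd; rw [fderiv_fun_add hf hg]; rfl

theorem pd_mul {f g : (Fin n → ℝ) → ℝ} {x : Fin n → ℝ} (hf : DifferentiableAt ℝ f x)
    (hg : DifferentiableAt ℝ g x) (i : Fin n) :
    pd (fun y => f y * g y) i x = pd f i x * g x + f x * pd g i x := by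
  unfold pd; rw [fderiv_fun_mul hf hg]; simp; ring

theorem pd_const_mul {f : (Fin n → ℝ) → ℝ} {x : Fin n → ℝ} (hf : DifferentiableAt ℝ f x)
    (c : ℝ) (i : Fin n) :
    pd (fun y => c * f y) i x = c * pd f i x := by
  unfold pd; rw [fderiv_const_mul hf]; rfl

theorem pd_sum {ι : Type*} (s : Finset ι) {f : ι → (Fin n → ℝ) → ℝ} {x : Fin n → ℝ}
    (hf : ∀ j ∈ s, DifferentiableAt ℝ (f j) x) (i : Fin n) :
    pd (fun y => ∑ j ∈ s, f j y) i x = ∑ j ∈ s, pd (f j) i x := by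
  unfold pd
  rw [fderiv_fun_sum hf]
  simp

theorem pd_proj (k : Fin n) (x : Fin n → ℝ) (i : Fin n) :
    pd (fun y : Fin n → ℝ => y k) i x = if k = i then 1 else 0 := by
  unfold pd
  have : (fun y : Fin n → ℝ => y k) = (ContinuousLinearMap.proj k :
      (Fin n → ℝ) →L[ℝ] ℝ) := rfl
  rw [this, ContinuousLinearMap.fderiv]
  simp [Pi.single_apply]

-- chain rule
theorem pd_comp {f : (Fin n → ℝ) → ℝ} {V : (Fin n → ℝ) → Fin n → ℝ} {x : Fin n → ℝ}
    (hf : DifferentiableAt ℝ f (V x)) (hV : ∀ j, DifferentiableAt ℝ (fun y => V y j) x)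
    (i : Fin n) :
    pd (fun y => f (V y)) i x = ∑ j, pd f j (V x) * pd (fun y => V y j) i x := by
  have hVd : DifferentiableAt ℝ V x := differentiableAt_pi.mpr hV
  have hcomp : fderiv ℝ (fun y => f (V y)) x =
      (fderiv ℝ f (V x)).comp (fderiv ℝ V x) := fderiv_comp x hf hVd
  have hpi : ∀ (w : Fin n → ℝ) (j : Fin n),
      fderiv ℝ V x w j = fderiv ℝ (fun y => V y j) x w := by
    intro w j
    rw [fderiv_pi hV]
    rfl
  unfold pd
  rw [hcomp]
  simp only [ContinuousLinearMap.coe_comp', Function.comp_apply]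
  rw [fderiv_eq_sum_pd f (V x) _]
  refine Finset.sum_congr rfl fun j _ => ?_
  rw [hpi]
  unfold pd; ring

-- smoothness of pd
theorem contDiffAt_pd {f : (Fin n → ℝ) → ℝ} {x : Fin n → ℝ}
    (hf : ContDiffAt ℝ (⊤ : ℕ∞) f x) (i : Fin n) : ContDiffAt ℝ (⊤ : ℕ∞) (fun y => pd f i y) x := by
  have h1 : ContDiffAt ℝ (⊤ : ℕ∞) (fderiv ℝ f) x := hf.fderiv_right (by simp)
  have h2 := (ContinuousLinearMap.apply ℝ ℝ ((Pi.single i 1 : Fin n → ℝ)) :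
      ((Fin n → ℝ) →L[ℝ] ℝ) →L[ℝ] ℝ).contDiff.comp_contDiffAt (x := x) h1
  exact h2

-- symmetry of second partials
theorem pd_pd_symm {f : (Fin n → ℝ) → ℝ} {x : Fin n → ℝ} (hf : ContDiffAt ℝ (⊤ : ℕ∞) f x)
    (i j : Fin n) : pd (pd f j) i x = pd (pd f i) j x := by
  have hsnd : ∀ a b : Fin n, pd (pd f b) a x =
      fderiv ℝ (fderiv ℝ f) x (Pi.single a 1) (Pi.single b 1) := by
    intro a b
    have hc : DifferentiableAt ℝ (fderiv ℝ f) x :=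
      (hf.fderiv_right (m := (⊤ : ℕ∞)) (by simp)).differentiableAt (by simp)
    have h1 : HasFDerivAt (fun w => fderiv ℝ f w (Pi.single b 1))
        ((ContinuousLinearMap.apply ℝ ℝ ((Pi.single b 1 : Fin n → ℝ))).comp
          (fderiv ℝ (fderiv ℝ f) x)) x :=
      ((ContinuousLinearMap.apply ℝ ℝ ((Pi.single b 1 : Fin n → ℝ))).hasFDerivAt).comp x
        hc.hasFDerivAt
    unfold pd
    rw [h1.fderiv]
    rfl
  have hsym := hf.isSymmSndFDerivAt (n := (⊤ : ℕ∞)) (by rw [minSmoothness_of_isRCLikeNormedField]; exact WithTop.coe_le_coe.mpr le_top)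
  rw [hsnd, hsnd, hsym.eq]

-- Euler's homogeneous function theorem
theorem euler {f : (Fin n → ℝ) → ℝ} {v : Fin n → ℝ} (k : ℕ)
    (hf : DifferentiableAt ℝ f v)
    (hhom : ∀ c : ℝ, 0 < c → f (c • v) = c ^ k * f v) :
    fderiv ℝ f v v = k * f v := by
  have hsm : HasDerivAt (fun c : ℝ => c • v) v 1 := by
    simpa using (hasDerivAt_id (1:ℝ)).smul_const v
  have h1 : HasDerivAt (fun c : ℝ => f (c • v)) (fderiv ℝ f v v) 1 := by
    have hf' : HasFDerivAt f (fderiv ℝ f v) ((1:ℝ) • v) := by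
      simpa using hf.hasFDerivAt
    have := hf'.comp_hasDerivAt 1 hsm
    exact this
  have h2 : HasDerivAt (fun c : ℝ => c ^ k * f v) ((k : ℝ) * f v) 1 := by
    simpa using (hasDerivAt_pow k (1:ℝ)).mul_const (f v)
  have heq : (fun c : ℝ => f (c • v)) =ᶠ[nhds (1:ℝ)] (fun c : ℝ => c ^ k * f v) := by
    filter_upwards [isOpen_Ioi.mem_nhds (by norm_num : (1:ℝ) ∈ Set.Ioi (0:ℝ))] with c hc
    exact hhom c hc
  have h3 : HasDerivAt (fun c : ℝ => f (c • v)) ((k : ℝ) * f v) 1 :=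
    h2.congr_of_eventuallyEq heq
  exact h1.unique h3

section Mink

variable {F : (Fin n → ℝ) → ℝ}
  (hsm : ContDiffOn ℝ (⊤ : ℕ∞) F {v | v ≠ 0})
  (hhom : ∀ c : ℝ, 0 ≤ c → ∀ v : Fin n → ℝ, F (c • v) = c * F v)

theorem isOpen_ne : IsOpen {v : Fin n → ℝ | v ≠ 0} := isOpen_compl_singleton

include hsm in
theorem hGc {v : Fin n → ℝ} (hv : v ≠ 0) : ContDiffAt ℝ (⊤ : ℕ∞) (fun z => F z ^ 2) v := by
  have := hsm.contDiffAt (isOpen_ne.mem_nhds hv)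
  exact this.pow 2

theorem gMat_eq (v : Fin n → ℝ) (i j : Fin n) :
    gMat F v i j = (1/2) * pd (pd (fun z => F z ^ 2) j) i v := rfl

include hsm hhom in
theorem fderiv_G_homog {v : Fin n → ℝ} (hv : v ≠ 0) {c : ℝ} (hc : 0 < c) :
    fderiv ℝ (fun z => F z ^ 2) (c • v) = c • fderiv ℝ (fun z => F z ^ 2) v := by
  set G := fun z => F z ^ 2 with hG
  have hcv : c • v ≠ 0 := smul_ne_zero (ne_of_gt hc) hv
  have heq : (fun z => G (c • z)) = (fun z => c ^ 2 * G z) := by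
    funext z; simp only [hG, hhom c hc.le z]; ring
  have hd1 : HasFDerivAt (fun z : Fin n → ℝ => c • z)
      (c • ContinuousLinearMap.id ℝ (Fin n → ℝ)) v := by
    exact (c • ContinuousLinearMap.id ℝ (Fin n → ℝ)).hasFDerivAt
  have hd2 : HasFDerivAt G (fderiv ℝ G (c • v)) (c • v) :=
    ((hGc hsm hcv).differentiableAt (by simp)).hasFDerivAt
  have h3 : HasFDerivAt (fun z => G (c • z))
      ((fderiv ℝ G (c • v)).comp (c • ContinuousLinearMap.id ℝ (Fin n → ℝ))) v :=
    hd2.comp v hd1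
  have h4 : HasFDerivAt (fun z => c ^ 2 * G z) ((c^2) • fderiv ℝ G v) v := by
    exact (((hGc hsm hv).differentiableAt (by simp)).hasFDerivAt).const_mul (c^2)
  rw [heq] at h3
  have h5 := h4.unique h3
  ext w
  have := congrArg (fun L => L w) h5
  simp only [ContinuousLinearMap.smul_apply, ContinuousLinearMap.coe_comp',
    Function.comp_apply, ContinuousLinearMap.coe_smul', Pi.smul_apply,
    ContinuousLinearMap.coe_id', id_eq, smul_eq_mul] at this ⊢
  rw [map_smul, smul_eq_mul] at this
  apply mul_left_cancel₀ hc.ne'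
  rw [← this]; ring

include hsm hhom in
theorem pdG_homog {v : Fin n → ℝ} (hv : v ≠ 0) {c : ℝ} (hc : 0 < c) (j : Fin n) :
    pd (fun z => F z ^ 2) j (c • v) = c * pd (fun z => F z ^ 2) j v := by
  unfold pd
  rw [fderiv_G_homog hsm hhom hv hc]
  rfl

include hsm in
theorem gMat_symm {v : Fin n → ℝ} (hv : v ≠ 0) (i j : Fin n) :
    gMat F v i j = gMat F v j i := by
  rw [gMat_eq, gMat_eq, pd_pd_symm (hGc hsm hv) i j]

include hsm hhom in
theorem sum_gMat_eq {v : Fin n → ℝ} (hv : v ≠ 0) (j : Fin n) :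
    ∑ i, v i * gMat F v i j = (1/2) * pd (fun z => F z ^ 2) j v := by
  set G := fun z => F z ^ 2 with hG
  have hdiff : DifferentiableAt ℝ (pd G j) v :=
    (contDiffAt_pd (hGc hsm hv) j).differentiableAt (by simp)
  have hhom1 : ∀ c : ℝ, 0 < c → pd G j (c • v) = c ^ 1 * pd G j v := by
    intro c hc
    rw [pow_one]
    exact pdG_homog hsm hhom hv hc j
  have he := euler 1 hdiff hhom1
  rw [fderiv_eq_sum_pd] at he
  have hexp : ∀ i, v i * pd (pd G j) i v = 2 * (v i * gMat F v i j) := by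
    intro i; rw [gMat_eq]; ring
  rw [Finset.sum_congr rfl (fun i _ => hexp i)] at he
  rw [← Finset.mul_sum] at he
  simp only [Nat.cast_one, one_mul] at he
  rw [← he]; ring

include hsm hhom in
theorem gMat_mulVec_eq {v : Fin n → ℝ} (hv : v ≠ 0) (j : Fin n) :
    (gMat F v).mulVec v j = (1/2) * pd (fun z => F z ^ 2) j v := by
  rw [← sum_gMat_eq hsm hhom hv j]
  rw [Matrix.mulVec]
  simp only [dotProduct]
  exact Finset.sum_congr rfl fun i _ => by rw [gMat_symm hsm hv]; ring

include hsm in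
theorem contDiffAt_gMat {v : Fin n → ℝ} (hv : v ≠ 0) (j k : Fin n) :
    ContDiffAt ℝ (⊤ : ℕ∞) (fun w => gMat F w j k) v := by
  have : (fun w => gMat F w j k) =
      (fun w => (1/2 : ℝ) * pd (pd (fun z => F z ^ 2) k) j w) := rfl
  rw [this]
  exact (contDiffAt_pd (contDiffAt_pd (hGc hsm hv) k) j).const_smul (1/2 : ℝ)

include hsm hhom in
theorem cartan {v : Fin n → ℝ} (hv : v ≠ 0) (m j : Fin n) :
    ∑ k, pd (fun w => gMat F w j k) m v * v k = 0 := by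
  set G := fun z => F z ^ 2 with hG
  have hφ : pd (fun w => ∑ k, gMat F w j k * w k) m v = gMat F v m j := by
    have heq : ∀ w ∈ {w : Fin n → ℝ | w ≠ 0},
        (∑ k, gMat F w j k * w k) = (1/2) * pd G j w := by
      intro w hw
      rw [← gMat_mulVec_eq hsm hhom hw j]
      rw [Matrix.mulVec]
      rfl
    rw [pd_congr_open isOpen_ne hv heq m]
    rw [pd_const_mul ((contDiffAt_pd (hGc hsm hv) j).differentiableAt (by simp)) _ m]
    rw [gMat_eq]
  have hφ2 : pd (fun w => ∑ k, gMat F w j k * w k) m v =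
      (∑ k, pd (fun w => gMat F w j k) m v * v k) + gMat F v j m := by
    have hdk : ∀ k : Fin n, DifferentiableAt ℝ (fun w : Fin n → ℝ => w k) v :=
      fun k => (ContinuousLinearMap.proj k : (Fin n → ℝ) →L[ℝ] ℝ).differentiableAt
    rw [pd_sum Finset.univ (fun k _ =>
      ((contDiffAt_gMat hsm hv j k).differentiableAt (by simp)).fun_mul (hdk k)) m]
    have : ∀ k : Fin n, pd (fun w => gMat F w j k * w k) m v =
        pd (fun w => gMat F w j k) m v * v k +
          gMat F v j k * (if k = m then 1 else 0) := by
      intro k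
      rw [pd_mul ((contDiffAt_gMat hsm hv j k).differentiableAt (by simp)) (hdk k) m,
        pd_proj k v m]
    rw [Finset.sum_congr rfl (fun k _ => this k), Finset.sum_add_distrib]
    congr 1
    rw [Finset.sum_eq_single m]
    · simp
    · intro b _ hb; simp [hb]
    · simp
  rw [hφ] at hφ2
  have := gMat_symm hsm hv m j
  linarith [hφ2]

end Mink

-- trace inequality
theorem trace_sq_le_aux {Hu S : Matrix (Fin n) (Fin n) ℝ}
    (hHs : Huᵀ = Hu) (hSsymm : Sᵀ = S) :
    (Matrix.trace (Hu * (S * S))) ^ 2 ≤ n * Matrix.trace ((Hu * (S * S)) * (Hu * (S * S))) := by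
  set B := S * Hu * S with hB
  have hBsymm : Bᵀ = B := by
    rw [hB, Matrix.transpose_mul, Matrix.transpose_mul, hSsymm, hHs, mul_assoc]
  have htrA : Matrix.trace (Hu * (S * S)) = Matrix.trace B := by
    rw [← mul_assoc, Matrix.trace_mul_comm, hB, ← mul_assoc]
  have htrAA : Matrix.trace ((Hu * (S * S)) * (Hu * (S * S))) = Matrix.trace (B * B) := by
    have h1 : Hu * (S * S) * (Hu * (S * S)) = (Hu * S) * (S * Hu * S * S) := by
      simp only [Matrix.mul_assoc]
    rw [h1, Matrix.trace_mul_comm, hB]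
    congr 1
    simp only [Matrix.mul_assoc]
  rw [htrA, htrAA]
  have hBji : ∀ i j, B j i = B i j := by
    intro i j
    have := congrArg (fun M : Matrix (Fin n) (Fin n) ℝ => M i j) hBsymm
    simpa [Matrix.transpose_apply] using this
  have htrBB : Matrix.trace (B * B) = ∑ i, ∑ j, (B i j) ^ 2 := by
    simp only [Matrix.trace, Matrix.diag, Matrix.mul_apply]
    exact Finset.sum_congr rfl fun i _ => Finset.sum_congr rfl fun j _ => by
      rw [hBji i j]; ring
  rw [htrBB]
  have h1 : (Matrix.trace B) ^ 2 ≤ n * ∑ i, (B i i) ^ 2 := by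
    have := sq_sum_le_card_mul_sum_sq (s := (Finset.univ : Finset (Fin n)))
      (f := fun i => B i i)
    simpa [Matrix.trace, Matrix.diag] using this
  have h2 : ∑ i, (B i i) ^ 2 ≤ ∑ i, ∑ j, (B i j) ^ 2 :=
    Finset.sum_le_sum fun i _ =>
      Finset.single_le_sum (f := fun j => (B i j) ^ 2) (fun j _ => sq_nonneg _)
        (Finset.mem_univ i)
  calc (Matrix.trace B) ^ 2 ≤ n * ∑ i, (B i i) ^ 2 := h1
  _ ≤ n * ∑ i, ∑ j, (B i j) ^ 2 := by
      exact mul_le_mul_of_nonneg_left h2 (by positivity)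

theorem trace_sq_le {g Hu : Matrix (Fin n) (Fin n) ℝ}
    (hg : g.PosDef) (hHs : Huᵀ = Hu) (A : Matrix (Fin n) (Fin n) ℝ)
    (hA : A * g = Hu) :
    (Matrix.trace A) ^ 2 ≤ n * Matrix.trace (A * A) := by
  have hginv : IsUnit g.det := isUnit_iff_ne_zero.mpr hg.det_pos.ne'
  have hAeq : A = Hu * g⁻¹ := by
    calc A = A * (g * g⁻¹) := by rw [Matrix.mul_nonsing_inv g hginv, mul_one]
    _ = (A * g) * g⁻¹ := by rw [mul_assoc]
    _ = Hu * g⁻¹ := by rw [hA]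
  have hperm : (g⁻¹).PosSemidef := hg.inv.posSemidef
  obtain ⟨S, hSsymm, hSS⟩ : ∃ S : Matrix (Fin n) (Fin n) ℝ, Sᵀ = S ∧ S * S = g⁻¹ := by
    open scoped MatrixOrder in
    refine ⟨CFC.sqrt g⁻¹, ?_, CFC.sqrt_mul_sqrt_self g⁻¹ hperm.nonneg⟩
    open scoped MatrixOrder in
    have h : (CFC.sqrt g⁻¹).IsHermitian := by simpa using (CFC.sqrt_nonneg g⁻¹).1
    rw [Matrix.IsHermitian] at h
    ext i j
    have := congrArg (fun M : Matrix (Fin n) (Fin n) ℝ => M i j) h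
    simpa [Matrix.conjTranspose_apply] using this
  rw [hAeq, ← hSS]
  exact trace_sq_le_aux hHs hSsymm

end BWaux

open BWaux in
/-- Bochner–Weitzenböck inequality with dimension parameter `N` on a weighted
Minkowski space. -/
theorem bochner_weitzenboeck_minkowski_dim {n : ℕ} (hn : 2 ≤ n) (Fk : MinkowskiNorm n)
    (Ω : Set (Fin n → ℝ)) (hΩ : IsOpen Ω)
    (Φ u : (Fin n → ℝ) → ℝ) (V : (Fin n → ℝ) → Fin n → ℝ)
    (hΦ : ContDiffOn ℝ (⊤ : ℕ∞) Φ Ω) (hu : ContDiffOn ℝ (⊤ : ℕ∞) u Ω) (hV : ContDiffOn ℝ (⊤ : ℕ∞) V Ω)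
    (hgrad0 : ∀ x ∈ Ω, egrad u x ≠ 0) (hV0 : ∀ x ∈ Ω, V x ≠ 0)
    (hVg : ∀ x ∈ Ω, (gMat Fk.F (V x)).mulVec (V x) = egrad u x) :
    ∀ N : ℝ, (n : ℝ) < N → ∀ x ∈ Ω,
      -(V x ⬝ᵥ (ehess Φ x).mulVec (V x))
        - (egrad Φ x ⬝ᵥ V x) ^ 2 / (N - n)
        + (divPhi Φ V x) ^ 2 / N
      ≤ divPhi Φ (fun y => ((gMat Fk.F (V y))⁻¹).mulVec
          (egrad (fun z => (1 / 2) * Fk.F (V z) ^ 2) y)) x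
        - (egrad (fun y => divPhi Φ V y) x ⬝ᵥ V x) := by
  intro N hN x hx
  set F := Fk.F with hFdef
  have hsm := Fk.smooth
  have hhom := Fk.homog
  -- basic smoothness facts
  have hVfull : ∀ y ∈ Ω, ContDiffAt ℝ (⊤ : ℕ∞) V y := fun y hy => hV.contDiffAt (hΩ.mem_nhds hy)
  have hVct : ∀ y ∈ Ω, ∀ i, ContDiffAt ℝ (⊤ : ℕ∞) (fun z => V z i) y := by
    intro y hy i
    have := (ContinuousLinearMap.proj i : ((Fin n → ℝ)) →L[ℝ] ℝ).contDiff.comp_contDiffAt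
      (x := y) (hVfull y hy)
    exact this
  have hdV : ∀ y ∈ Ω, ∀ i, DifferentiableAt ℝ (fun z => V z i) y := fun y hy i =>
    (hVct y hy i).differentiableAt (by simp)
  have huct : ∀ y ∈ Ω, ContDiffAt ℝ (⊤ : ℕ∞) u y := fun y hy => hu.contDiffAt (hΩ.mem_nhds hy)
  have hΦct : ∀ y ∈ Ω, ContDiffAt ℝ (⊤ : ℕ∞) Φ y := fun y hy => hΦ.contDiffAt (hΩ.mem_nhds hy)
  -- C2 : the key differentiated identity g(V)·DV = Hess u
  have hC2 : ∀ y ∈ Ω, ∀ i j : Fin n,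
      ∑ k, gMat F (V y) j k * pd (fun z => V z k) i y = pd (pd u j) i y := by
    intro y hy i j
    have hne := hV0 y hy
    have heq : ∀ z ∈ Ω, (∑ k, gMat F (V z) j k * V z k) = pd u j z := by
      intro z hz
      have h := congrFun (hVg z hz) j
      simpa [Matrix.mulVec, dotProduct, egrad, pd] using h
    have h1 : pd (pd u j) i y = pd (fun z => ∑ k, gMat F (V z) j k * V z k) i y :=
      (pd_congr_open hΩ hy heq i).symm
    have hgVd : ∀ k : Fin n, DifferentiableAt ℝ (fun z => gMat F (V z) j k) y := by
      intro k
      exact (((contDiffAt_gMat hsm hne j k).comp y (hVfull y hy)).differentiableAt (by simp))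
    rw [h1, pd_sum Finset.univ (fun k _ => (hgVd k).fun_mul (hdV y hy k)) i]
    have hterm : ∀ k : Fin n, pd (fun z => gMat F (V z) j k * V z k) i y
        = pd (fun z => gMat F (V z) j k) i y * V y k
          + gMat F (V y) j k * pd (fun z => V z k) i y :=
      fun k => pd_mul (hgVd k) (hdV y hy k) i
    rw [Finset.sum_congr rfl fun k _ => hterm k, Finset.sum_add_distrib]
    have hchain : ∀ k : Fin n, pd (fun z => gMat F (V z) j k) i y
        = ∑ m, pd (fun w => gMat F w j k) m (V y) * pd (fun z => V z m) i y := fun k =>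
      pd_comp ((contDiffAt_gMat hsm hne j k).differentiableAt (by simp))
        (fun m => hdV y hy m) i
    have hzero : ∑ k, pd (fun z => gMat F (V z) j k) i y * V y k = 0 := by
      rw [Finset.sum_congr rfl fun k _ => by rw [hchain k]]
      rw [Finset.sum_congr rfl fun k (_ : k ∈ Finset.univ) =>
        Finset.sum_mul Finset.univ (fun m => pd (fun w => gMat F w j k) m (V y) *
          pd (fun z => V z m) i y) (V y k)]
      rw [Finset.sum_comm]
      apply Finset.sum_eq_zero
      intro m _
      have hre : ∀ k : Fin n,
          pd (fun w => gMat F w j k) m (V y) * pd (fun z => V z m) i y * V y k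
          = pd (fun z => V z m) i y * (pd (fun w => gMat F w j k) m (V y) * V y k) := by
        intro k; ring
      rw [Finset.sum_congr rfl fun k _ => hre k, ← Finset.mul_sum,
        cartan hsm hhom hne m j, mul_zero]
    rw [hzero, zero_add]
  -- C1 : gradient of (1/2)F(V)²
  have hC1 : ∀ y ∈ Ω, ∀ k : Fin n,
      pd (fun z => (1/2) * F (V z) ^ 2) k y = ∑ j, pd u j y * pd (fun z => V z j) k y := by
    intro y hy k
    have hne := hV0 y hy
    have hGd : DifferentiableAt ℝ (fun z => F z ^ 2) (V y) :=
      (hGc hsm hne).differentiableAt (by simp)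
    have hcomp : DifferentiableAt ℝ (fun z => F (V z) ^ 2) y := by
      have := ((hGc hsm hne).comp y (hVfull y hy)).differentiableAt (by simp)
      exact this
    have h1 : pd (fun z => (1/2) * F (V z) ^ 2) k y
        = (1/2) * pd (fun z => F (V z) ^ 2) k y := pd_const_mul hcomp _ k
    have h2 : pd (fun z => F (V z) ^ 2) k y
        = ∑ j, pd (fun z => F z ^ 2) j (V y) * pd (fun z => V z j) k y :=
      pd_comp hGd (fun m => hdV y hy m) k
    rw [h1, h2, Finset.mul_sum]
    refine Finset.sum_congr rfl fun j _ => ?_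
    have h3 := gMat_mulVec_eq hsm hhom hne j
    have h4 := congrFun (hVg y hy) j
    have h5 : pd u j y = (1/2) * pd (fun z => F z ^ 2) j (V y) := by
      rw [← h3, h4]
      rfl
    rw [h5]; ring
  -- C3 : the vector field W coincides with DV·V on Ω
  have hW : ∀ y ∈ Ω, ∀ i : Fin n,
      ((gMat F (V y))⁻¹).mulVec (egrad (fun z => (1 / 2) * F (V z) ^ 2) y) i
        = ∑ j, pd (fun z => V z i) j y * V y j := by
    intro y hy i
    have hne := hV0 y hy
    set g : Matrix (Fin n) (Fin n) ℝ := gMat F (V y) with hgdef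
    set A : Matrix (Fin n) (Fin n) ℝ := Matrix.of (fun a b => pd (fun z => V z b) a y)
      with hAdef
    set Hu : Matrix (Fin n) (Fin n) ℝ := Matrix.of (fun a b => pd (pd u b) a y) with hHudef
    have hgpd : g.PosDef := Fk.posdef (V y) hne
    have hgs : gᵀ = g := by
      ext a c; exact (gMat_symm hsm hne c a)
    have hAg : A * g = Hu := by
      ext a c
      rw [Matrix.mul_apply]
      show _ = pd (pd u c) a y
      rw [← hC2 y hy a c]
      refine Finset.sum_congr rfl fun k _ => ?_
      have : g k c = g c k :=
        congrArg (fun M : Matrix (Fin n) (Fin n) ℝ => M c k) hgs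
      rw [hAdef]
      simp only [Matrix.of_apply]
      rw [this]; ring
    have hHus : Huᵀ = Hu := by
      ext a c
      simp only [Matrix.transpose_apply, hHudef, Matrix.of_apply]
      exact (pd_pd_symm (huct y hy) c a)
    have hEg : egrad (fun z => (1 / 2) * F (V z) ^ 2) y = Hu.mulVec (V y) := by
      funext k
      have h0 : egrad (fun z => (1 / 2) * F (V z) ^ 2) y k
          = pd (fun z => (1/2) * F (V z) ^ 2) k y := rfl
      rw [h0, hC1 y hy k]
      have h1 : ∀ j, pd u j y = g.mulVec (V y) j := by
        intro j
        exact (congrFun (hVg y hy) j).symm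
      rw [Finset.sum_congr rfl fun j _ => by rw [h1 j]]
      have h2 : (∑ j, g.mulVec (V y) j * pd (fun z => V z j) k y)
          = A.mulVec (g.mulVec (V y)) k := by
        rw [Matrix.mulVec, dotProduct]
        refine Finset.sum_congr rfl fun j _ => ?_
        rw [hAdef]; simp only [Matrix.of_apply]; ring
      rw [h2, Matrix.mulVec_mulVec, hAg]
    rw [hEg]
    -- g⁻¹ * Hu = Aᵀ
    have hginv : IsUnit g.det := isUnit_iff_ne_zero.mpr hgpd.det_pos.ne'
    have hAeq : A = Hu * g⁻¹ := by
      calc A = A * (g * g⁻¹) := by rw [Matrix.mul_nonsing_inv g hginv, mul_one]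
      _ = (A * g) * g⁻¹ := by rw [mul_assoc]
      _ = Hu * g⁻¹ := by rw [hAg]
    have hAT : Aᵀ = g⁻¹ * Hu := by
      rw [hAeq, Matrix.transpose_mul, Matrix.transpose_nonsing_inv, hgs, hHus]
    have h3 : (g⁻¹).mulVec (Hu.mulVec (V y)) i = (Aᵀ).mulVec (V y) i := by
      rw [Matrix.mulVec_mulVec, hAT]
    rw [h3]
    rw [Matrix.mulVec, dotProduct]
    refine Finset.sum_congr rfl fun j _ => ?_
    simp only [Matrix.transpose_apply, hAdef, Matrix.of_apply]
  -- canonical quantities at x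
  set Q : ℝ := ∑ i, ∑ j, pd (fun z => V z i) j x * pd (fun z => V z j) i x with hQdef
  set HP : ℝ := ∑ i, ∑ j, pd (pd Φ j) i x * V x i * V x j with hHPdef
  set a : ℝ := ∑ i, pd (fun z => V z i) i x with hadef
  set b : ℝ := ∑ i, pd Φ i x * V x i with hbdef
  set C1 : ℝ := ∑ j, ∑ i, pd (pd (fun z => V z i) i) j x * V x j with hC1def
  set R : ℝ := ∑ j, ∑ i, pd Φ i x * pd (fun z => V z i) j x * V x j with hRdef
  -- the divPhi of W
  have hstmt1 : divPhi Φ (fun y => ((gMat F (V y))⁻¹).mulVec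
      (egrad (fun z => (1 / 2) * F (V z) ^ 2) y)) x = (C1 + Q) + R := by
    have hdW : ∀ i j : Fin n, DifferentiableAt ℝ (fun y => pd (fun z => V z i) j y) x :=
      fun i j => (contDiffAt_pd (hVct x hx i) j).differentiableAt (by simp)
    have hpdW : ∀ i : Fin n,
        pd (fun y => ((gMat F (V y))⁻¹).mulVec
          (egrad (fun z => (1 / 2) * F (V z) ^ 2) y) i) i x
        = ∑ j, (pd (pd (fun z => V z i) i) j x * V x j
            + pd (fun z => V z i) j x * pd (fun z => V z j) i x) := by
      intro i
      have hcongr : pd (fun y => ((gMat F (V y))⁻¹).mulVec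
            (egrad (fun z => (1 / 2) * F (V z) ^ 2) y) i) i x
          = pd (fun y => ∑ j, pd (fun z => V z i) j y * V y j) i x :=
        pd_congr_open hΩ hx (fun y hy => hW y hy i) i
      rw [hcongr]
      rw [pd_sum Finset.univ (fun j _ => (hdW i j).fun_mul (hdV x hx j)) i]
      refine Finset.sum_congr rfl fun j _ => ?_
      rw [pd_mul (hdW i j) (hdV x hx j) i]
      rw [pd_pd_symm (hVct x hx i) i j]
    have h0 : divPhi Φ (fun y => ((gMat F (V y))⁻¹).mulVec
          (egrad (fun z => (1 / 2) * F (V z) ^ 2) y)) x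
        = (∑ i, pd (fun y => ((gMat F (V y))⁻¹).mulVec
            (egrad (fun z => (1 / 2) * F (V z) ^ 2) y) i) i x)
          + ∑ i, pd Φ i x * ((gMat F (V x))⁻¹).mulVec
              (egrad (fun z => (1 / 2) * F (V z) ^ 2) x) i := rfl
    rw [h0, Finset.sum_congr rfl fun i (_ : i ∈ Finset.univ) => hpdW i]
    have hfirst : (∑ i, ∑ j, (pd (pd (fun z => V z i) i) j x * V x j
        + pd (fun z => V z i) j x * pd (fun z => V z j) i x)) = C1 + Q := by
      rw [Finset.sum_congr rfl fun i (_ : i ∈ Finset.univ) => Finset.sum_add_distrib,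
        Finset.sum_add_distrib, hC1def, hQdef, Finset.sum_comm]
    have hsecond : (∑ i, pd Φ i x * ((gMat F (V x))⁻¹).mulVec
        (egrad (fun z => (1 / 2) * F (V z) ^ 2) x) i) = R := by
      rw [Finset.sum_congr rfl fun i (_ : i ∈ Finset.univ) => by rw [hW x hx i]]
      rw [hRdef, Finset.sum_comm]
      refine Finset.sum_congr rfl fun i _ => ?_
      rw [Finset.mul_sum]
      exact Finset.sum_congr rfl fun j _ => by ring
    rw [hfirst, hsecond]
  have hpd_div : ∀ j : Fin n, pd (fun y => divPhi Φ V y) j x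
      = (∑ i, pd (fun z => pd (fun w => V w i) i z) j x)
        + ∑ i, (pd (fun z => pd Φ i z) j x * V x i + pd Φ i x * pd (fun z => V z i) j x) := by
    intro j
    have hfun : (fun y => divPhi Φ V y)
        = (fun y => (∑ i, pd (fun w => V w i) i y) + ∑ i, pd Φ i y * V y i) := rfl
    rw [hfun]
    have d1 : ∀ i : Fin n, DifferentiableAt ℝ (fun z => pd (fun w => V w i) i z) x := fun i =>
      (contDiffAt_pd (hVct x hx i) i).differentiableAt (by simp)
    have d2 : ∀ i : Fin n, DifferentiableAt ℝ (fun z => pd Φ i z) x := fun i =>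
      (contDiffAt_pd (hΦct x hx) i).differentiableAt (by simp)
    have d1s : DifferentiableAt ℝ (fun z => ∑ i, pd (fun w => V w i) i z) x := by
      apply DifferentiableAt.fun_sum; intro i _; exact d1 i
    have d2s : DifferentiableAt ℝ (fun z => ∑ i, pd Φ i z * V z i) x := by
      apply DifferentiableAt.fun_sum; intro i _; exact (d2 i).mul (hdV x hx i)
    rw [pd_add d1s d2s j, pd_sum Finset.univ (fun i _ => d1 i) j,
        pd_sum Finset.univ (fun i _ => (d2 i).fun_mul (hdV x hx i)) j]
    congr 1
    exact Finset.sum_congr rfl fun i _ => pd_mul (d2 i) (hdV x hx i) j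
  have hstmt2 : egrad (fun y => divPhi Φ V y) x ⬝ᵥ V x = (C1 + HP) + R := by
    have hLHS : egrad (fun y => divPhi Φ V y) x ⬝ᵥ V x
        = ∑ j, pd (fun y => divPhi Φ V y) j x * V x j := rfl
    rw [hLHS, Finset.sum_congr rfl fun j (_ : j ∈ Finset.univ) => by rw [hpd_div j]]
    have hsplit : ∀ j : Fin n,
        ((∑ i, pd (fun z => pd (fun w => V w i) i z) j x)
          + ∑ i, (pd (fun z => pd Φ i z) j x * V x i
              + pd Φ i x * pd (fun z => V z i) j x)) * V x j
        = (∑ i, pd (fun z => pd (fun w => V w i) i z) j x * V x j)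
          + ((∑ i, pd (fun z => pd Φ i z) j x * V x i * V x j)
            + ∑ i, pd Φ i x * pd (fun z => V z i) j x * V x j) := by
      intro j
      rw [add_mul, Finset.sum_mul, Finset.sum_mul]
      congr 1
      rw [← Finset.sum_add_distrib]
      exact Finset.sum_congr rfl fun i _ => by ring
    rw [Finset.sum_congr rfl fun j _ => hsplit j, Finset.sum_add_distrib,
      Finset.sum_add_distrib]
    have hHP' : (∑ j, ∑ i, pd (fun z => pd Φ i z) j x * V x i * V x j) = HP := by
      rw [hHPdef]
      exact Finset.sum_congr rfl fun j _ => Finset.sum_congr rfl fun i _ => by ring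
    rw [hHP']
    have e1 : (∑ j, ∑ i, pd (fun z => pd (fun w => V w i) i z) j x * V x j) = C1 := rfl
    have e2 : (∑ j, ∑ i, pd Φ i x * pd (fun z => V z i) j x * V x j) = R := rfl
    rw [e1, e2]
    ring
  have hstmt3 : V x ⬝ᵥ (ehess Φ x).mulVec (V x) = HP := by
    rw [hHPdef, dotProduct]
    refine Finset.sum_congr rfl fun i _ => ?_
    rw [Matrix.mulVec, dotProduct, Finset.mul_sum]
    refine Finset.sum_congr rfl fun j _ => ?_
    show V x i * (ehess Φ x i j * V x j) = pd (pd Φ j) i x * V x i * V x j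
    have h : ehess Φ x i j = pd (pd Φ j) i x := rfl
    rw [h]
    ring
  have hstmt4 : egrad Φ x ⬝ᵥ V x = b := rfl
  have hstmt5 : divPhi Φ V x = a + b := rfl
  have hQineq : a ^ 2 ≤ n * Q := by
    have hne := hV0 x hx
    set A : Matrix (Fin n) (Fin n) ℝ := Matrix.of (fun c d => pd (fun z => V z d) c x)
      with hAdef
    set Hu : Matrix (Fin n) (Fin n) ℝ := Matrix.of (fun c d => pd (pd u d) c x) with hHudef
    have hgpd : (gMat F (V x)).PosDef := Fk.posdef (V x) hne
    have hgs : (gMat F (V x))ᵀ = gMat F (V x) := by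
      ext c d; exact gMat_symm hsm hne d c
    have hAg : A * (gMat F (V x)) = Hu := by
      ext c d
      rw [Matrix.mul_apply]
      show _ = pd (pd u d) c x
      rw [← hC2 x hx c d]
      refine Finset.sum_congr rfl fun k _ => ?_
      have hsymk : gMat F (V x) k d = gMat F (V x) d k := gMat_symm hsm hne k d
      rw [hAdef]
      simp only [Matrix.of_apply]
      rw [hsymk]; ring
    have hHus : Huᵀ = Hu := by
      ext c d
      simp only [Matrix.transpose_apply, hHudef, Matrix.of_apply]
      exact (pd_pd_symm (huct x hx) d c)
    have htr := trace_sq_le hgpd hHus A hAg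
    have h1 : Matrix.trace A = a := rfl
    have h2 : Matrix.trace (A * A) = Q := by
      rw [hQdef]
      simp only [Matrix.trace, Matrix.diag, Matrix.mul_apply, hAdef, Matrix.of_apply]
      exact Finset.sum_congr rfl fun i _ => Finset.sum_congr rfl fun j _ => by ring
    rw [h1, h2] at htr
    exact htr
  rw [hstmt1, hstmt2, hstmt3, hstmt4, hstmt5]
  have hn0 : (0:ℝ) < n := by exact_mod_cast Nat.lt_of_lt_of_le Nat.zero_lt_two hn
  have hNn : (0:ℝ) < N - n := by linarith
  have hN0 : (0:ℝ) < N := lt_trans hn0 hN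
  have h1 : (a + b) ^ 2 / N ≤ a ^ 2 / (n:ℝ) + b ^ 2 / (N - (n:ℝ)) := by
    rw [div_add_div _ _ (ne_of_gt hn0) (ne_of_gt hNn), div_le_div_iff₀ hN0 (by positivity)]
    nlinarith [sq_nonneg ((N - (n:ℝ)) * a - (n:ℝ) * b)]
  have h2 : a ^ 2 / (n:ℝ) ≤ Q := by
    rw [div_le_iff₀ hn0]
    linarith [hQineq, mul_comm Q (n:ℝ)]
  linarith
end

section
/- Symmetry of the Finsler Hessian on a Minkowski space (the Minkowski-space content of Lemma 2.3): Let F be a Minkowski norm on ℝⁿ, Ω ⊆ ℝⁿ open, u : Ω → ℝ a C² function, and V : Ω → ℝⁿ \ {0} a C¹ vector field satisfying Σⱼ g(V(x))_{ij} V(x)ⱼ = ∂u/∂xᵢ(x) for all x ∈ Ω and all i (V is the Finsler gradient of u). Then for every x ∈ Ω: g(V(x)) · DV(x) = Hess u(x), where DV(x) is the Jacobian matrix (∂Vᵢ/∂xⱼ(x)) and Hess u(x) is the Euclidean Hessian matrix of u at x. In particular the matrix g(V(x))·DV(x) is symmetric, i.e., the Finsler Hessian ∇²u(x) = DV(x)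 is symmetric with respect to the inner product g(V(x)). -/
open scoped Matrix

section aux
variable {n : ℕ}

lemma sum_single_apply (L : (Fin n → ℝ) →L[ℝ] ℝ) (v : Fin n → ℝ) :
    L v = ∑ k, v k * L (Pi.single k 1) := by
  conv_lhs => rw [← Finset.univ_sum_single v]
  rw [map_sum]
  refine Finset.sum_congr rfl fun k _ => ?_
  have h1 : (Pi.single k (v k) : Fin n → ℝ) = v k • (Pi.single k 1 : Fin n → ℝ) := by
    rw [← Pi.single_smul]
    simp
  rw [h1, map_smul, smul_eq_mul]

lemma hGat (F : (Fin n → ℝ) → ℝ) (hF : ContDiffOn ℝ (⊤ : ℕ∞) F {v | v ≠ 0})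
    {v : Fin n → ℝ} (hv : v ≠ 0) :
    ContDiffAt ℝ (⊤ : ℕ∞) (fun z => F z ^ 2) v :=
  (hF.pow 2).contDiffAt (isOpen_compl_singleton.mem_nhds hv)

lemma hG'at (F : (Fin n → ℝ) → ℝ) (hF : ContDiffOn ℝ (⊤ : ℕ∞) F {v | v ≠ 0})
    {v : Fin n → ℝ} (hv : v ≠ 0) :
    ContDiffAt ℝ (⊤ : ℕ∞) (fderiv ℝ (fun z => F z ^ 2)) v :=
  (hGat F hF hv).fderiv_right (by simp)

lemma fderiv_homog (F : (Fin n → ℝ) → ℝ) (hF : ContDiffOn ℝ (⊤ : ℕ∞) F {v | v ≠ 0})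
    (hhom : ∀ c : ℝ, 0 ≤ c → ∀ v : Fin n → ℝ, F (c • v) = c * F v)
    {v : Fin n → ℝ} (hv : v ≠ 0) {c : ℝ} (hc : 0 < c) (w : Fin n → ℝ) :
    fderiv ℝ (fun z => F z ^ 2) (c • v) w = c * fderiv ℝ (fun z => F z ^ 2) v w := by
  set G := fun z : Fin n → ℝ => F z ^ 2 with hG
  have hdv : DifferentiableAt ℝ G v := (hGat F hF hv).differentiableAt (by simp)
  have hcv : c • v ≠ 0 := smul_ne_zero hc.ne' hv
  have hdcv : DifferentiableAt ℝ G (c • v) := (hGat F hF hcv).differentiableAt (by simp)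
  have hsm : HasFDerivAt (fun w : Fin n → ℝ => c • w)
      (c • ContinuousLinearMap.id ℝ (Fin n → ℝ)) v := by
    exact (c • ContinuousLinearMap.id ℝ (Fin n → ℝ)).hasFDerivAt
  have h1 : HasFDerivAt (fun w => G (c • w))
      ((fderiv ℝ G (c • v)).comp (c • ContinuousLinearMap.id ℝ (Fin n → ℝ))) v :=
    hdcv.hasFDerivAt.comp v hsm
  have h2 : HasFDerivAt (fun w => G (c • w)) ((c ^ 2) • fderiv ℝ G v) v := by
    have heq : (fun w => G (c • w)) = fun w => c ^ 2 * G w := by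
      funext w
      show F (c • w) ^ 2 = c ^ 2 * F w ^ 2
      rw [hhom c hc.le w, mul_pow]
    rw [heq]
    simpa [smul_smul] using hdv.hasFDerivAt.const_mul (c ^ 2)
  have huniq := h1.unique h2
  have happ := congrArg (fun L : (Fin n → ℝ) →L[ℝ] ℝ => L w) huniq
  simp only [ContinuousLinearMap.comp_apply, ContinuousLinearMap.smul_apply,
    ContinuousLinearMap.id_apply, smul_eq_mul] at happ
  have hmap : (fderiv ℝ G (c • v)) (c • w) = c * (fderiv ℝ G (c • v)) w := by
    rw [map_smul]; simp [smul_eq_mul]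
  have hkey : c * (fderiv ℝ G (c • v)) w = c * (c * (fderiv ℝ G v) w) := by
    rw [← hmap, happ]; ring
  exact mul_left_cancel₀ hc.ne' hkey


lemma snd_eq (F : (Fin n → ℝ) → ℝ) (hF : ContDiffOn ℝ (⊤ : ℕ∞) F {v | v ≠ 0})
    {v : Fin n → ℝ} (hv : v ≠ 0) (a w : Fin n → ℝ) :
    fderiv ℝ (fun z => fderiv ℝ (fun z => F z ^ 2) z w) v a
      = fderiv ℝ (fderiv ℝ (fun z => F z ^ 2)) v a w := by
  have hd : DifferentiableAt ℝ (fderiv ℝ (fun z => F z ^ 2)) v :=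
    (hG'at F hF hv).differentiableAt (by simp)
  rw [fderiv_clm_apply hd (differentiableAt_const w)]
  simp

lemma snd_symm (F : (Fin n → ℝ) → ℝ) (hF : ContDiffOn ℝ (⊤ : ℕ∞) F {v | v ≠ 0})
    {v : Fin n → ℝ} (hv : v ≠ 0) (a b : Fin n → ℝ) :
    fderiv ℝ (fderiv ℝ (fun z => F z ^ 2)) v a b
      = fderiv ℝ (fderiv ℝ (fun z => F z ^ 2)) v b a := by
  apply second_derivative_symmetric_of_eventually
    (f := fun z => F z ^ 2) (f' := fderiv ℝ (fun z => F z ^ 2))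
  · filter_upwards [isOpen_compl_singleton.mem_nhds hv] with z hz using
      ((hGat F hF hz).differentiableAt (by simp)).hasFDerivAt
  · exact ((hG'at F hF hv).differentiableAt (by simp)).hasFDerivAt

lemma euler (F : (Fin n → ℝ) → ℝ) (hF : ContDiffOn ℝ (⊤ : ℕ∞) F {v | v ≠ 0})
    (hhom : ∀ c : ℝ, 0 ≤ c → ∀ v : Fin n → ℝ, F (c • v) = c * F v)
    {v : Fin n → ℝ} (hv : v ≠ 0) (w : Fin n → ℝ) :
    fderiv ℝ (fun z => fderiv ℝ (fun z => F z ^ 2) z w) v v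
      = fderiv ℝ (fun z => F z ^ 2) v w := by
  set h := fun z : Fin n → ℝ => fderiv ℝ (fun z => F z ^ 2) z w with hh
  have hdh : DifferentiableAt ℝ h v := by
    exact ((hG'at F hF hv).differentiableAt (by simp)).clm_apply (differentiableAt_const w)
  have hline : HasDerivAt (fun t : ℝ => t • v) v (1 : ℝ) := by
    simpa using (hasDerivAt_id (1:ℝ)).smul_const v
  have hdh' : HasFDerivAt h (fderiv ℝ h v) ((1:ℝ) • v) := by
    rw [one_smul]; exact hdh.hasFDerivAt
  have h1 : HasDerivAt (fun t : ℝ => h (t • v)) (fderiv ℝ h v v) 1 := by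
    exact hdh'.comp_hasDerivAt 1 hline
  have heq : (fun t : ℝ => h (t • v)) =ᶠ[nhds (1:ℝ)] fun t => t * h v := by
    filter_upwards [eventually_gt_nhds (zero_lt_one)] with t ht
    exact fderiv_homog F hF hhom hv ht w
  have h2 : HasDerivAt (fun t : ℝ => t * h v) (fderiv ℝ h v v) 1 :=
    h1.congr_of_eventuallyEq heq.symm
  have h3 : HasDerivAt (fun t : ℝ => t * h v) (h v) 1 := by
    simpa using (hasDerivAt_id (1:ℝ)).mul_const (h v)
  exact h2.unique h3


lemma gV_half_grad (F : (Fin n → ℝ) → ℝ) (hF : ContDiffOn ℝ (⊤ : ℕ∞) F {v | v ≠ 0})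
    (hhom : ∀ c : ℝ, 0 ≤ c → ∀ v : Fin n → ℝ, F (c • v) = c * F v)
    {v : Fin n → ℝ} (hv : v ≠ 0) (j : Fin n) :
    (gMat F v).mulVec v j = (1/2) * fderiv ℝ (fun z => F z ^ 2) v (Pi.single j 1) := by
  calc (gMat F v).mulVec v j = ∑ k, gMat F v j k * v k := by
        simp [Matrix.mulVec, dotProduct]
    _ = ∑ k, (1/2) * (v k *
          ((fderiv ℝ (fderiv ℝ (fun z => F z ^ 2)) v).flip (Pi.single j 1)) (Pi.single k 1)) := by
        refine Finset.sum_congr rfl fun k _ => ?_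
        have e1 : gMat F v j k
            = 1/2 * fderiv ℝ (fderiv ℝ (fun z => F z ^ 2)) v (Pi.single j 1) (Pi.single k 1) := by
          simp only [gMat, Matrix.of_apply]
          rw [snd_eq F hF hv]
        rw [e1, snd_symm F hF hv]
        simp only [ContinuousLinearMap.flip_apply]
        ring
    _ = (1/2) * (((fderiv ℝ (fderiv ℝ (fun z => F z ^ 2)) v).flip (Pi.single j 1)) v) := by
        rw [← Finset.mul_sum, ← sum_single_apply]
    _ = (1/2) * fderiv ℝ (fun z => fderiv ℝ (fun z => F z ^ 2) z (Pi.single j 1)) v v := by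
        rw [ContinuousLinearMap.flip_apply, ← snd_eq F hF hv]
    _ = (1/2) * fderiv ℝ (fun z => F z ^ 2) v (Pi.single j 1) := by
        rw [euler F hF hhom hv]

end aux

/-- Symmetry of the Finsler Hessian on a Minkowski space: `g(V(x)) · DV(x) = Hess u(x)`,
where `V` is the Finsler gradient vector field of `u`; in particular `g(V(x)) · DV(x)`
is a symmetric matrix. -/




theorem finsler_hessian_symm {n : ℕ} (hn : 2 ≤ n) (Fk : MinkowskiNorm n)
    (Ω : Set (Fin n → ℝ)) (hΩ : IsOpen Ω)
    (u : (Fin n → ℝ) → ℝ) (V : (Fin n → ℝ) → Fin n → ℝ)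
    (hu : ContDiffOn ℝ 2 u Ω) (hV : ContDiffOn ℝ 1 V Ω)
    (hV0 : ∀ x ∈ Ω, V x ≠ 0)
    (hVg : ∀ x ∈ Ω, ∀ i : Fin n,
      (gMat Fk.F (V x)).mulVec (V x) i = fderiv ℝ u x (Pi.single i 1)) :
    ∀ x ∈ Ω,
      gMat Fk.F (V x) *
          (Matrix.of fun i j => fderiv ℝ (fun y => V y i) x (Pi.single j 1)) = ehess u x ∧
      (gMat Fk.F (V x) *
          (Matrix.of fun i j => fderiv ℝ (fun y => V y i) x (Pi.single j 1))).IsSymm := by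
  intro x hx
  have hF := Fk.smooth
  have hhom := Fk.homog
  have hxnh : Ω ∈ nhds x := hΩ.mem_nhds hx
  have hVx : V x ≠ 0 := hV0 x hx
  have hVd : DifferentiableAt ℝ V x := (hV.contDiffAt hxnh).differentiableAt (by norm_num)
  have hu2 : ContDiffAt ℝ 2 u x := hu.contDiffAt hxnh
  have hgrad : ∀ y ∈ Ω, ∀ j : Fin n, fderiv ℝ u y (Pi.single j 1)
      = (1/2) * fderiv ℝ (fun z => Fk.F z ^ 2) (V y) (Pi.single j 1) := by
    intro y hy j
    rw [← hVg y hy j, gV_half_grad Fk.F hF hhom (hV0 y hy) j]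
  have hcomp : ∀ i k : Fin n, fderiv ℝ (fun y => V y k) x (Pi.single i 1)
      = (fderiv ℝ V x (Pi.single i 1)) k := by
    intro i k
    have h1 : HasFDerivAt (fun y => V y k)
        ((ContinuousLinearMap.proj k).comp (fderiv ℝ V x)) x := by
      simpa [Function.comp_def] using
        (ContinuousLinearMap.proj (R := ℝ) (φ := fun _ : Fin n => ℝ) k).hasFDerivAt.comp x
          hVd.hasFDerivAt
    rw [h1.fderiv]
    rfl
  have hmain : ∀ i j : Fin n, ehess u x i j
      = ∑ k, gMat Fk.F (V x) k j * fderiv ℝ (fun y => V y k) x (Pi.single i 1) := by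
    intro i j
    have heve : (fun y => fderiv ℝ u y (Pi.single j 1))
        =ᶠ[nhds x] fun y => (1/2) * fderiv ℝ (fun z => Fk.F z ^ 2) (V y) (Pi.single j 1) := by
      filter_upwards [hxnh] with y hy using hgrad y hy j
    have hhj : DifferentiableAt ℝ
        (fun z => fderiv ℝ (fun z => Fk.F z ^ 2) z (Pi.single j 1)) (V x) :=
      ((hG'at Fk.F hF hVx).differentiableAt (by simp)).clm_apply (differentiableAt_const _)
    have hchain : HasFDerivAt
        (fun y => fderiv ℝ (fun z => Fk.F z ^ 2) (V y) (Pi.single j 1))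
        ((fderiv ℝ (fun z => fderiv ℝ (fun z => Fk.F z ^ 2) z (Pi.single j 1)) (V x)).comp
          (fderiv ℝ V x)) x :=
      hhj.hasFDerivAt.comp x hVd.hasFDerivAt
    have hchain2 : HasFDerivAt
        (fun y => (1/2 : ℝ) * fderiv ℝ (fun z => Fk.F z ^ 2) (V y) (Pi.single j 1))
        ((1/2 : ℝ) •
          ((fderiv ℝ (fun z => fderiv ℝ (fun z => Fk.F z ^ 2) z (Pi.single j 1)) (V x)).comp
            (fderiv ℝ V x))) x := hchain.const_mul _
    show fderiv ℝ (fun y => fderiv ℝ u y (Pi.single j 1)) x (Pi.single i 1) = _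
    rw [heve.fderiv_eq, hchain2.fderiv]
    simp only [ContinuousLinearMap.smul_apply, ContinuousLinearMap.comp_apply, smul_eq_mul]
    rw [snd_eq Fk.F hF hVx]
    have hexp : fderiv ℝ (fderiv ℝ (fun z => Fk.F z ^ 2)) (V x)
          (fderiv ℝ V x (Pi.single i 1)) (Pi.single j 1)
        = ∑ k, (fderiv ℝ V x (Pi.single i 1)) k *
            fderiv ℝ (fderiv ℝ (fun z => Fk.F z ^ 2)) (V x) (Pi.single k 1) (Pi.single j 1) := by
      have h := sum_single_apply
        ((fderiv ℝ (fderiv ℝ (fun z => Fk.F z ^ 2)) (V x)).flip (Pi.single j 1))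
        (fderiv ℝ V x (Pi.single i 1))
      simpa only [ContinuousLinearMap.flip_apply] using h
    rw [hexp, Finset.mul_sum]
    refine Finset.sum_congr rfl fun k _ => ?_
    have hg : gMat Fk.F (V x) k j = 1/2 *
        fderiv ℝ (fderiv ℝ (fun z => Fk.F z ^ 2)) (V x) (Pi.single k 1) (Pi.single j 1) := by
      simp only [gMat, Matrix.of_apply]
      rw [snd_eq Fk.F hF hVx]
    rw [hg, hcomp i k]
    ring
  have hgsym : ∀ i k : Fin n, gMat Fk.F (V x) i k = gMat Fk.F (V x) k i := by
    intro i k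
    simp only [gMat, Matrix.of_apply]
    rw [snd_eq Fk.F hF hVx, snd_eq Fk.F hF hVx, snd_symm Fk.F hF hVx]
  have hesym : ∀ i j : Fin n, ehess u x i j = ehess u x j i := by
    intro i j
    have hdu1 : DifferentiableAt ℝ (fderiv ℝ u) x :=
      (hu2.fderiv_right (m := 1) (by norm_num)).differentiableAt (by norm_num)
    have he : ∀ a b : Fin n → ℝ, fderiv ℝ (fun y => fderiv ℝ u y b) x a
        = fderiv ℝ (fderiv ℝ u) x a b := by
      intro a b
      rw [fderiv_clm_apply hdu1 (differentiableAt_const b)]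
      simp
    have hsymm := hu2.isSymmSndFDerivAt (by simp [minSmoothness])
    simp only [ehess, Matrix.of_apply]
    rw [he, he]
    exact hsymm _ _
  have hprod : ∀ i j : Fin n,
      (gMat Fk.F (V x) *
        (Matrix.of fun i j => fderiv ℝ (fun y => V y i) x (Pi.single j 1))) i j
      = ehess u x i j := by
    intro i j
    rw [Matrix.mul_apply]
    have hstep : ∑ k, gMat Fk.F (V x) i k *
          (Matrix.of fun i j => fderiv ℝ (fun y => V y i) x (Pi.single j 1)) k j
        = ∑ k, gMat Fk.F (V x) k i * fderiv ℝ (fun y => V y k) x (Pi.single j 1) := by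
      refine Finset.sum_congr rfl fun k _ => ?_
      rw [hgsym i k]
      rfl
    rw [hstep, ← hmain j i, hesym j i]
  refine ⟨?_, ?_⟩
  · ext i j
    exact hprod i j
  · rw [Matrix.IsSymm]
    ext i j
    rw [Matrix.transpose_apply, hprod i j, hprod j i, hesym j i]
end

section
/- Riccati-type matrix equation (the computational core of Lemma 3.2): Let A, B, R : ℝ → M_n(ℝ) be matrix-valued functions on an interval containing 0, with A twice differentiable, B differentiable, and A(t) invertible for every t. Assume: (h1) A'(t) = B(t)A(t) + A(t)B(t)ᵀ for all t; (h2) B(t)A(t) − A(t)B(t)ᵀ = B(0)A(0) − A(0)B(0)ᵀ for all t (the Wronskian is constant); (h3) A''(t) = −2R(t) + 2B(t)A(t)B(t)ᵀ for all t. Then B'(t) = −R(t)·A(t)⁻¹ − B(t)² for all t, and consequently d/dt [tr B(t)] + tr(B(t)²) + tr(R(t)·A(t)⁻¹) = 0. -/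
/-!
Differentiating `A' = BA + ABᵀ` gives `A'' = (B'A + BA') + (A'Bᵀ + AB'ᵀ)`, and constancy of the
Wronskian `BA - ABᵀ` says the two brackets agree, so `A'' = 2(B'A + BA')`. Comparing with
`A'' = -2R + 2BABᵀ` and substituting `A'` once more, the `BABᵀ` terms cancel and leave
`B'A = -R - B²A`; multiplying by `A⁻¹` gives the Riccati equation, whose trace is the second claim.
-/

open scoped Matrix
open Filter Topology

section EntrywiseDeriv

variable {𝕜 : Type*} [NontriviallyNormedField 𝕜] {l m n : Type*}

def HasEntrywiseDerivAt (X : 𝕜 → Matrix m n 𝕜) (X' : Matrix m n 𝕜) (t : 𝕜) : Prop :=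
  ∀ i j, HasDerivAt (fun s => X s i j) (X' i j) t

variable {X Y : 𝕜 → Matrix m n 𝕜} {X' Y' : Matrix m n 𝕜} {t : 𝕜}

theorem hasEntrywiseDerivAt_const (c : Matrix m n 𝕜) (t : 𝕜) :
    HasEntrywiseDerivAt (fun _ => c) 0 t :=
  fun i j => hasDerivAt_const t (c i j)

theorem HasEntrywiseDerivAt.add (hX : HasEntrywiseDerivAt X X' t)
    (hY : HasEntrywiseDerivAt Y Y' t) : HasEntrywiseDerivAt (fun s => X s + Y s) (X' + Y') t :=
  fun i j => (hX i j).add (hY i j)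

theorem HasEntrywiseDerivAt.sub (hX : HasEntrywiseDerivAt X X' t)
    (hY : HasEntrywiseDerivAt Y Y' t) : HasEntrywiseDerivAt (fun s => X s - Y s) (X' - Y') t :=
  fun i j => (hX i j).sub (hY i j)

theorem HasEntrywiseDerivAt.transpose (hX : HasEntrywiseDerivAt X X' t) :
    HasEntrywiseDerivAt (fun s => (X s)ᵀ) X'ᵀ t :=
  fun i j => hX j i

theorem HasEntrywiseDerivAt.mul [Fintype n] {Z : 𝕜 → Matrix n l 𝕜} {Z' : Matrix n l 𝕜}
    (hX : HasEntrywiseDerivAt X X' t) (hZ : HasEntrywiseDerivAt Z Z' t) :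
    HasEntrywiseDerivAt (fun s => X s * Z s) (X' * Z t + X t * Z') t := by
  intro i j
  simp only [Matrix.mul_apply, Matrix.add_apply, ← Finset.sum_add_distrib]
  exact HasDerivAt.fun_sum fun k _ => (hX i k).mul (hZ k j)

theorem HasEntrywiseDerivAt.unique_of_eventuallyEq (hX : HasEntrywiseDerivAt X X' t)
    (hY : HasEntrywiseDerivAt Y Y' t) (hXY : X =ᶠ[𝓝 t] Y) : X' = Y' := by
  ext i j
  refine (hX i j).unique ((hY i j).congr_of_eventuallyEq ?_)
  filter_upwards [hXY] with s hs
  rw [hs]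

end EntrywiseDeriv

section Riccati

variable {K : Type*} [Field K] [NeZero (2 : K)] {n : Type*} [Fintype n] [DecidableEq n]

theorem Matrix.eq_neg_mul_inv_sub_sq_of_wronskian {A B R A' B' : Matrix n n K}
    (hA : IsUnit A.det) (h1 : A' = B * A + A * Bᵀ)
    (hW : B' * A + B * A' = A' * Bᵀ + A * B'ᵀ)
    (h3 : B' * A + B * A' + (A' * Bᵀ + A * B'ᵀ) = (-2 : K) • R + (2 : K) • (B * A * Bᵀ)) :
    B' = -(R * A⁻¹) - B ^ 2 := by
  have h2BA : (2 : K) • (B' * A) = (2 : K) • (-R - B ^ 2 * A) := by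
    rw [← hW, h1, mul_add, ← mul_assoc, ← mul_assoc] at h3
    rw [sq]
    linear_combination (norm := module) h3
  have hBA : B' * A = -R - B ^ 2 * A := smul_right_injective _ two_ne_zero h2BA
  calc B' = B' * A * A⁻¹ := by rw [Matrix.mul_nonsing_inv_cancel_right _ _ hA]
    _ = -(R * A⁻¹) - B ^ 2 := by
      rw [hBA, Matrix.sub_mul, Matrix.neg_mul, Matrix.mul_nonsing_inv_cancel_right _ _ hA]

end Riccati

theorem riccati_matrix_equation_general {n : ℕ} (I : Set ℝ) (hI : IsOpen I)
    (A B R A' A'' B' : ℝ → Matrix (Fin n) (Fin n) ℝ)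
    (hA : ∀ t ∈ I, ∀ i j, HasDerivAt (fun s => A s i j) (A' t i j) t)
    (hA' : ∀ t ∈ I, ∀ i j, HasDerivAt (fun s => A' s i j) (A'' t i j) t)
    (hB : ∀ t ∈ I, ∀ i j, HasDerivAt (fun s => B s i j) (B' t i j) t)
    (hinv : ∀ t ∈ I, IsUnit (A t).det)
    (h1 : ∀ t ∈ I, A' t = B t * A t + A t * (B t)ᵀ)
    (h2 : ∀ t ∈ I, B t * A t - A t * (B t)ᵀ = B 0 * A 0 - A 0 * (B 0)ᵀ)
    (h3 : ∀ t ∈ I, A'' t = (-2 : ℝ) • R t + (2 : ℝ) • (B t * A t * (B t)ᵀ)) :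
    ∀ t ∈ I, B' t = -(R t * (A t)⁻¹) - B t ^ 2 ∧
      (B' t).trace + (B t ^ 2).trace + (R t * (A t)⁻¹).trace = 0 := by
  intro t ht
  have hI_nhds : I ∈ 𝓝 t := hI.mem_nhds ht
  have hBA : HasEntrywiseDerivAt (fun s => B s * A s) (B' t * A t + B t * A' t) t :=
    HasEntrywiseDerivAt.mul (hB t ht) (hA t ht)
  have hABT : HasEntrywiseDerivAt (fun s => A s * (B s)ᵀ) (A' t * (B t)ᵀ + A t * (B' t)ᵀ) t :=
    HasEntrywiseDerivAt.mul (hA t ht) (HasEntrywiseDerivAt.transpose (hB t ht))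
  have hA'' : A'' t = B' t * A t + B t * A' t + (A' t * (B t)ᵀ + A t * (B' t)ᵀ) :=
    HasEntrywiseDerivAt.unique_of_eventuallyEq (hA' t ht) (hBA.add hABT)
      (eventually_of_mem hI_nhds h1)
  have hW : B' t * A t + B t * A' t - (A' t * (B t)ᵀ + A t * (B' t)ᵀ) = 0 :=
    (hBA.sub hABT).unique_of_eventuallyEq (hasEntrywiseDerivAt_const _ t)
      (eventually_of_mem hI_nhds h2)
  have hB' : B' t = -(R t * (A t)⁻¹) - B t ^ 2 :=
    Matrix.eq_neg_mul_inv_sub_sq_of_wronskian (hinv t ht) (h1 t ht) (sub_eq_zero.mp hW)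
      (hA'' ▸ h3 t ht)
  refine ⟨hB', ?_⟩
  rw [hB', Matrix.trace_sub, Matrix.trace_neg]
  ring

/-- Riccati-type matrix equation: from `A' = BA + ABᵀ`, constancy of the Wronskian
`BA - ABᵀ`, and `A'' = -2R + 2BABᵀ`, one gets `B' = -R A⁻¹ - B²`, hence
`(tr B)' + tr(B²) + tr(R A⁻¹) = 0`. -/
theorem riccati_matrix_equation {n : ℕ} (I : Set ℝ) (hI : IsOpen I) (h0 : (0 : ℝ) ∈ I)
    (A B R A' A'' B' : ℝ → Matrix (Fin n) (Fin n) ℝ)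
    (hA : ∀ t ∈ I, ∀ i j, HasDerivAt (fun s => A s i j) (A' t i j) t)
    (hA' : ∀ t ∈ I, ∀ i j, HasDerivAt (fun s => A' s i j) (A'' t i j) t)
    (hB : ∀ t ∈ I, ∀ i j, HasDerivAt (fun s => B s i j) (B' t i j) t)
    (hinv : ∀ t ∈ I, IsUnit (A t).det)
    (h1 : ∀ t ∈ I, A' t = B t * A t + A t * (B t)ᵀ)
    (h2 : ∀ t ∈ I, B t * A t - A t * (B t)ᵀ = B 0 * A 0 - A 0 * (B 0)ᵀ)
    (h3 : ∀ t ∈ I, A'' t = (-2 : ℝ) • R t + (2 : ℝ) • (B t * A t * (B t)ᵀ)) :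
    ∀ t ∈ I, B' t = -(R t * (A t)⁻¹) - B t ^ 2 ∧
      (B' t).trace + (B t ^ 2).trace + (R t * (A t)⁻¹).trace = 0 :=
  riccati_matrix_equation_general I hI A B R A' A'' B' hA hA' hB hinv h1 h2 h3
end

section
/- Algebraic lemma in the final step of the Li–Yau gradient estimate (step (V) of the proof of Theorem 4.3, following Davies): Let N > 0, θ > 1, K' ≤ 0, s > 0 be real numbers, and let x ≥ 0 and y be real numbers. Set α := s·(x − θy). If α > 0 and α ≥ 2s²·( (x − y)²/N + K'·x ), then α ≤ (N·θ²/2)·( 1 − K'·s/(2(θ−1)) ). -/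
/-- Comparing `(ξ + a)²` with its tangent line at `(t + 1) m` gives `(2t + 1) a ≤ (t + 1)² m`,
and `(t + 1)² ≤ (2t + 1)(1 + t / 2)` for `t ≥ 0`. -/
lemma le_mul_one_add_div_two_of_sq_add_le {m t a ξ : ℝ} (hm : 0 < m) (ht : 0 ≤ t) (hξ : 0 ≤ ξ)
    (h : (ξ + a) ^ 2 ≤ m * (a + 2 * t * ξ)) : a ≤ m * (1 + t / 2) := by
  have tangent : 2 * ((t + 1) * m) * (ξ + a) - ((t + 1) * m) ^ 2 ≤ (ξ + a) ^ 2 := by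
    nlinarith [sq_nonneg (ξ + a - (t + 1) * m)]
  have hmul : (2 * t + 1) * a ≤ (t + 1) ^ 2 * m := by
    nlinarith [mul_nonneg hm.le hξ]
  nlinarith [mul_nonneg ht hm.le]

theorem liyau_algebraic_lemma_general (N θ K' s x y : ℝ)
    (hN : 0 < N) (hθ : 1 < θ) (hK : K' ≤ 0) (hs : 0 < s) (hx : 0 ≤ x)
    (α : ℝ) (hα : α = s * (x - θ * y))
    (hineq : 2 * s ^ 2 * ((x - y) ^ 2 / N + K' * x) ≤ α) :
    α ≤ N * θ ^ 2 / 2 * (1 - K' * s / (2 * (θ - 1))) := by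
  have hθ1 : 0 < θ - 1 := by linarith
  have ht : 0 ≤ -K' * s / (θ - 1) := div_nonneg (by nlinarith) hθ1.le
  -- `ξ = s(θ - 1)x` absorbs `y` : `ξ + α = sθ(x - y)`.
  have key : (s * (θ - 1) * x + α) ^ 2
      ≤ N * θ ^ 2 / 2 * (α + 2 * (-K' * s / (θ - 1)) * (s * (θ - 1) * x)) := by
    have hsq : (s * (θ - 1) * x + α) ^ 2 = s ^ 2 * θ ^ 2 * (x - y) ^ 2 := by
      rw [hα]; ring
    have hlin : 2 * (-K' * s / (θ - 1)) * (s * (θ - 1) * x) = -2 * K' * s ^ 2 * x := by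
      field_simp
    have hscaled := mul_le_mul_of_nonneg_left hineq (by positivity : 0 ≤ N * θ ^ 2 / 2)
    rw [hsq, hlin]
    calc s ^ 2 * θ ^ 2 * (x - y) ^ 2
        = N * θ ^ 2 / 2 * (2 * s ^ 2 * ((x - y) ^ 2 / N + K' * x)) - N * θ ^ 2 * K' * s ^ 2 * x := by
          field_simp; ring
      _ ≤ N * θ ^ 2 / 2 * (α + -2 * K' * s ^ 2 * x) := by nlinarith
  calc α ≤ N * θ ^ 2 / 2 * (1 + -K' * s / (θ - 1) / 2) :=
        le_mul_one_add_div_two_of_sq_add_le (by positivity) ht (by positivity) key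
    _ = N * θ ^ 2 / 2 * (1 - K' * s / (2 * (θ - 1))) := by field_simp; ring

/-- The algebraic lemma in the final step of the Li–Yau gradient estimate. -/
theorem liyau_algebraic_lemma (N θ K' s x y : ℝ)
    (hN : 0 < N) (hθ : 1 < θ) (hK : K' ≤ 0) (hs : 0 < s) (hx : 0 ≤ x)
    (α : ℝ) (hα : α = s * (x - θ * y)) (hαpos : 0 < α)
    (hineq : 2 * s ^ 2 * ((x - y) ^ 2 / N + K' * x) ≤ α) :
    α ≤ N * θ ^ 2 / 2 * (1 - K' * s / (2 * (θ - 1))) :=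
  liyau_algebraic_lemma_general N θ K' s x y hN hθ hK hs hx α hα hineq
end
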